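/- arXiv:2412.03500 — 12 statements merged into one kernel-verified Lean document; each statement's English description precedes it below -/
import Mathlib

section
/- Let R be a commutative ring with unity, A a commutative unital R-algebra, and σ, τ R-algebra endomorphisms of A. Let D : A → A be a (σ,τ)-derivation and α ∈ A. If there exists β ∈ A such that D(α) = β(τ(α) − σ(α)), then D(α^n) = β(τ(α^n) − σ(α^n)) for every positive integer n. -/
/-- Let `D` be a `(σ,τ)`-derivation of a commutative unital `R`-algebra `A` and
`α ∈ A`.  If there exists `β ∈ A` with `D α = β * (τ α - σ α)`, then
`D (α ^ n) = β * (τ (α ^ n) - σ (α ^ n))` for every positive integer `n`. -/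
theorem stmt4 {R A : Type*} [CommRing R] [CommRing A] [Algebra R A]
    (σ τ : A →ₐ[R] A) (D : A →ₗ[R] A)
    (hD : ∀ x y : A, D (x * y) = D x * τ y + σ x * D y)
    (α β : A) (hβ : D α = β * (τ α - σ α)) :
    ∀ n : ℕ, 0 < n → D (α ^ n) = β * (τ (α ^ n) - σ (α ^ n)) := by
  intro n hn
  induction n with
  | zero => omega
  | succ k ih =>
    rcases Nat.eq_zero_or_pos k with hk | hk
    · simpa [hk] using hβ
    · have := ih hk
      rw [pow_succ, hD, this, hβ, map_mul, map_mul, map_pow, map_pow]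
      ring
end

section
/- Let R be a commutative ring with unity and let A be a commutative unital R-algebra that is a free R-module of finite rank n having an R-basis of the form {1, α, α², ..., α^{n−1}} for some α ∈ A. Let σ and τ be R-algebra endomorphisms of A. Then a (σ,τ)-derivation D : A → A is inner if and only if there exists β ∈ A such that D(α) = β(τ(α) − σ(α)). -/
/-! Both `D` and the inner derivation `x ↦ β (τ x - σ x)` are `(σ,τ)`-derivations, and two such
maps that agree at `α` agree at every power of `α` by the twisted Leibniz rule. Since the powers
`1, α, …, α^{n-1}` form a basis, the two `R`-linear maps coincide. -/

namespace TwistedDerivation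

variable {R A : Type*} [CommRing R] [CommRing A] [Algebra R A]

def IsTwistedDerivation (σ τ : A →ₐ[R] A) (D : A →ₗ[R] A) : Prop :=
  ∀ x y : A, D (x * y) = D x * τ y + σ x * D y

def inner (σ τ : A →ₐ[R] A) (β : A) : A →ₗ[R] A :=
  LinearMap.mulLeft R β ∘ₗ (τ.toLinearMap - σ.toLinearMap)

@[simp]
theorem inner_apply (σ τ : A →ₐ[R] A) (β x : A) : inner σ τ β x = β * (τ x - σ x) := rfl

theorem isTwistedDerivation_inner (σ τ : A →ₐ[R] A) (β : A) :
    IsTwistedDerivation σ τ (inner σ τ β) := by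
  intro x y
  simp only [inner_apply, map_mul]
  ring

variable {σ τ : A →ₐ[R] A} {D : A →ₗ[R] A}

theorem IsTwistedDerivation.map_one (hD : IsTwistedDerivation σ τ D) : D 1 = 0 := by
  simpa using hD 1 1

theorem IsTwistedDerivation.map_pow_eq_of_map_eq {D' : A →ₗ[R] A}
    (hD : IsTwistedDerivation σ τ D) (hD' : IsTwistedDerivation σ τ D') {α : A}
    (hα : D α = D' α) (k : ℕ) : D (α ^ k) = D' (α ^ k) := by
  induction k with
  | zero => rw [pow_zero, hD.map_one, hD'.map_one]
  | succ k ih => rw [pow_succ, hD, hD', ih, hα]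

end TwistedDerivation

/-- Let `A` be a commutative unital `R`-algebra, free of finite rank `n` with an
`R`-basis of the form `{1, α, α², …, α^{n-1}}` for some `α ∈ A`, and let `σ`, `τ` be `R`-algebra
endomorphisms of `A`.  A `(σ,τ)`-derivation `D : A → A` is inner if and only if there exists
`β ∈ A` with `D α = β * (τ α - σ α)`. -/
theorem stmt5 {R A : Type*} [CommRing R] [CommRing A] [Algebra R A]
    {n : ℕ} (α : A) (b : Module.Basis (Fin n) R A) (hb : ∀ i : Fin n, b i = α ^ (i : ℕ))
    (σ τ : A →ₐ[R] A) (D : A →ₗ[R] A)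
    (hD : ∀ x y : A, D (x * y) = D x * τ y + σ x * D y) :
    (∃ β : A, ∀ x : A, D x = β * (τ x - σ x)) ↔
      (∃ β : A, D α = β * (τ α - σ α)) := by
  refine ⟨fun ⟨β, h⟩ => ⟨β, h α⟩, fun ⟨β, hβ⟩ => ⟨β, fun x => ?_⟩⟩
  have hD : TwistedDerivation.IsTwistedDerivation σ τ D := hD
  have hEq : D = TwistedDerivation.inner σ τ β := b.ext fun i => by
    rw [hb i]
    exact hD.map_pow_eq_of_map_eq (TwistedDerivation.isTwistedDerivation_inner σ τ β) hβ i
  rw [hEq, TwistedDerivation.inner_apply]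
end

section
/- Let d be a squarefree integer with d ≠ 1, let K = ℚ(√d) be the corresponding quadratic number field, and let O_K be its ring of integers. Let σ and τ be two distinct ring endomorphisms of O_K. Then every ℤ-linear map D : O_K → O_K with D(1) = 0 is a (σ,τ)-derivation of O_K. -/
set_option maxHeartbeats 1000000


open NumberField

/-- Let `d` be a squarefree integer, `d ≠ 1`, let `K = ℚ(√d)` be the
corresponding quadratic number field and `O_K` its ring of integers.  Let `σ`, `τ` be two
distinct ring endomorphisms of `O_K`.  Then every `ℤ`-linear map `D : O_K → O_K` with `D 1 = 0`
is a `(σ,τ)`-derivation. -/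
theorem stmt6 (d : ℤ) (hsf : Squarefree d) (hd1 : d ≠ 1)
    (K : Type*) [Field K] [NumberField K]
    (hdeg : Module.finrank ℚ K = 2) (hs : ∃ s : K, s ^ 2 = (d : K))
    (σ τ : 𝓞 K →+* 𝓞 K) (hστ : σ ≠ τ)
    (D : 𝓞 K →ₗ[ℤ] 𝓞 K) (hD1 : D 1 = 0) :
    ∀ x y : 𝓞 K, D (x * y) = D x * τ y + σ x * D y := by
  have hrank : Module.finrank ℤ (𝓞 K) = 2 := by
    rw [NumberField.RingOfIntegers.rank, hdeg]
  -- any three elements of 𝓞 K are ℤ-linearly dependent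
  have hdep : ∀ u v w : 𝓞 K, ∃ a b c : ℤ, (¬(a = 0 ∧ b = 0 ∧ c = 0)) ∧
      (a : 𝓞 K) * u + (b : 𝓞 K) * v + (c : 𝓞 K) * w = 0 := by
    intro u v w
    have hni : ¬ LinearIndependent ℤ ![u, v, w] := by
      intro h
      have h3 := h.fintype_card_le_finrank
      rw [hrank] at h3
      simp at h3
    obtain ⟨g, hg, i, hi⟩ := Fintype.not_linearIndependent_iff.mp hni
    refine ⟨g 0, g 1, g 2, ?_, ?_⟩
    · rintro ⟨h0, h1, h2⟩
      fin_cases i <;> simp_all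
    · have h := hg
      rw [Fin.sum_univ_three] at h
      simpa [zsmul_eq_mul] using h
  -- basic facts
  have hDmul : ∀ (n : ℤ) (z : 𝓞 K), D ((n : 𝓞 K) * z) = (n : 𝓞 K) * D z := by
    intro n z
    rw [← zsmul_eq_mul, map_zsmul, zsmul_eq_mul]
  have hDint : ∀ n : ℤ, D ((n : 𝓞 K)) = 0 := by
    intro n
    have h := hDmul n 1
    simpa [hD1] using h
  have hcancel : ∀ (n : ℤ) (z : 𝓞 K), n ≠ 0 → (n : 𝓞 K) * z = 0 → z = 0 := by
    intro n z hn h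
    rcases mul_eq_zero.mp h with h | h
    · exact absurd h (Int.cast_ne_zero.mpr hn)
    · exact h
  -- the diagonal case
  have hdiag : ∀ x : 𝓞 K, D (x * x) = D x * τ x + σ x * D x := by
    intro x
    by_cases hP : ∃ b c : ℤ, b ≠ 0 ∧ (b : 𝓞 K) * x + (c : 𝓞 K) = 0
    · -- x is "rational", hence D x = 0 and D (x*x) = 0
      obtain ⟨b, c, hb, hbc⟩ := hP
      have hDx : D x = 0 := by
        refine hcancel b _ hb ?_
        rw [← hDmul]
        have hbx : (b : 𝓞 K) * x = -(c : 𝓞 K) := by linear_combination hbc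
        rw [hbx, map_neg, hDint]
        ring
      have hDxx : D (x * x) = 0 := by
        refine hcancel (b * b) _ (mul_ne_zero hb hb) ?_
        rw [← hDmul]
        have h2 : ((b * b : ℤ) : 𝓞 K) * (x * x) = ((c * c : ℤ) : 𝓞 K) := by
          push_cast
          linear_combination ((b : 𝓞 K) * x - (c : 𝓞 K)) * hbc
        rw [h2, hDint]
      rw [hDxx, hDx]
      ring
    · -- x is irrational: σ x ≠ τ x
      have hστx : σ x ≠ τ x := by
        intro he
        apply hστ
        refine RingHom.ext fun y => ?_
        obtain ⟨a, b, c, hnz0, hrel⟩ := hdep x y 1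
        rw [mul_one] at hrel
        have hb : b ≠ 0 := by
          intro hb0
          subst hb0
          by_cases ha : a = 0
          · subst ha
            have hc : (c : 𝓞 K) = 0 := by linear_combination hrel
            exact hnz0 ⟨rfl, rfl, by exact_mod_cast hc⟩
          · exact hP ⟨a, c, ha, by linear_combination hrel⟩
        have hσr : (a : 𝓞 K) * σ x + (b : 𝓞 K) * σ y + (c : 𝓞 K) = 0 := by
          have h := congrArg σ hrel
          simpa [map_add, map_mul, map_intCast] using h
        have hτr : (a : 𝓞 K) * τ x + (b : 𝓞 K) * τ y + (c : 𝓞 K) = 0 := by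
          have h := congrArg τ hrel
          simpa [map_add, map_mul, map_intCast] using h
        have hz : (b : 𝓞 K) * (σ y - τ y) = 0 := by
          linear_combination hσr - hτr - (a : 𝓞 K) * he
        exact sub_eq_zero.mp (hcancel b _ hb hz)
      obtain ⟨a, b, c, hnz0, hrel⟩ := hdep (x * x) x 1
      rw [mul_one] at hrel
      have ha : a ≠ 0 := by
        intro ha0
        subst ha0
        by_cases hb : b = 0
        · subst hb
          have hc : (c : 𝓞 K) = 0 := by linear_combination hrel
          exact hnz0 ⟨rfl, rfl, by exact_mod_cast hc⟩
        · exact hP ⟨b, c, hb, by linear_combination hrel⟩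
      have hσr : (a : 𝓞 K) * (σ x * σ x) + (b : 𝓞 K) * σ x + (c : 𝓞 K) = 0 := by
        have h := congrArg σ hrel
        simpa [map_add, map_mul, map_intCast] using h
      have hτr : (a : 𝓞 K) * (τ x * τ x) + (b : 𝓞 K) * τ x + (c : 𝓞 K) = 0 := by
        have h := congrArg τ hrel
        simpa [map_add, map_mul, map_intCast] using h
      have hfac : (σ x - τ x) * ((a : 𝓞 K) * (σ x + τ x) + (b : 𝓞 K)) = 0 := by
        linear_combination hσr - hτr
      have hsum : (a : 𝓞 K) * (σ x + τ x) + (b : 𝓞 K) = 0 := by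
        rcases mul_eq_zero.mp hfac with h | h
        · exact absurd (sub_eq_zero.mp h) hστx
        · exact h
      have hDxx : (a : 𝓞 K) * D (x * x) = -((b : 𝓞 K) * D x) := by
        have hm : (a : 𝓞 K) * (x * x) = -((b : 𝓞 K) * x) - (c : 𝓞 K) := by
          linear_combination hrel
        rw [← hDmul, hm, map_sub, map_neg, hDmul, hDint]
        ring
      have hz : (a : 𝓞 K) * (D (x * x) - (D x * τ x + σ x * D x)) = 0 := by
        linear_combination hDxx - D x * hsum
      exact sub_eq_zero.mp (hcancel a _ ha hz)
  -- the general case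
  intro x y
  obtain ⟨a, b, c, hnz0, hrel⟩ := hdep x y 1
  rw [mul_one] at hrel
  by_cases hb : b ≠ 0
  · have h1 : (b : 𝓞 K) * D (x * y) = -((a : 𝓞 K) * D (x * x)) - (c : 𝓞 K) * D x := by
      have hm : (b : 𝓞 K) * (x * y) = -((a : 𝓞 K) * (x * x)) - (c : 𝓞 K) * x := by
        linear_combination x * hrel
      rw [← hDmul, hm, map_sub, map_neg, hDmul, hDmul]
    have h2 : (b : 𝓞 K) * τ y = -((a : 𝓞 K) * τ x) - (c : 𝓞 K) := by
      have h := congrArg τ hrel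
      simp only [map_add, map_mul, map_intCast, map_zero] at h
      linear_combination h
    have h3 : (b : 𝓞 K) * D y = -((a : 𝓞 K) * D x) := by
      have hm : (b : 𝓞 K) * y = -((a : 𝓞 K) * x) - (c : 𝓞 K) := by
        linear_combination hrel
      rw [← hDmul, hm, map_sub, map_neg, hDmul, hDint]
      ring
    have hdx := hdiag x
    have hz : (b : 𝓞 K) * (D (x * y) - (D x * τ y + σ x * D y)) = 0 := by
      linear_combination h1 - D x * h2 - σ x * h3 - (a : 𝓞 K) * hdx
    exact sub_eq_zero.mp (hcancel b _ hb hz)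
  · push_neg at hb
    subst hb
    have ha : a ≠ 0 := by
      intro ha0
      subst ha0
      have hc : (c : 𝓞 K) = 0 := by linear_combination hrel
      exact hnz0 ⟨rfl, rfl, by exact_mod_cast hc⟩
    have hDx : D x = 0 := by
      refine hcancel a _ ha ?_
      rw [← hDmul]
      have hm : (a : 𝓞 K) * x = -(c : 𝓞 K) := by linear_combination hrel
      rw [hm, map_neg, hDint]
      ring
    have hσr : (a : 𝓞 K) * σ x = -(c : 𝓞 K) := by
      have h := congrArg σ hrel
      simp only [map_add, map_mul, map_intCast, map_zero] at h
      linear_combination h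
    have h1 : (a : 𝓞 K) * D (x * y) = -((c : 𝓞 K) * D y) := by
      have hm : (a : 𝓞 K) * (x * y) = -((c : 𝓞 K) * y) := by
        linear_combination y * hrel
      rw [← hDmul, hm, map_neg, hDmul]
    have hz : (a : 𝓞 K) * (D (x * y) - (D x * τ y + σ x * D y)) = 0 := by
      linear_combination h1 - D y * hσr - (a : 𝓞 K) * τ y * hDx
    exact sub_eq_zero.mp (hcancel a _ ha hz)
end

section
/- Let d be a squarefree integer with d ≠ 1 and d ≢ 1 (mod 4), and consider the ring ℤ[√d] (a free ℤ-module with basis {1, √d}). Let σ and τ be two distinct ring endomorphisms of ℤ[√d], let D : ℤ[√d] → ℤ[√d] be a (σ,τ)-derivation, and write D(√d) = c₀ + c₁√d with c₀, c₁ ∈ ℤ. Then D is inner if and only if 2d divides c₀ and 2 divides c₁. -/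
/-!
Both twisting maps are determined by the image of `√d`, which must be a square root of `d`, hence
`±√d`; so for `σ ≠ τ` the difference `τ - σ` sends `√d` to `±2√d`. A `(σ,τ)`-derivation kills `1`
and is therefore determined by `D √d`, while `τ - σ` is determined by `(τ - σ) √d`; being inner thus
amounts to `2√d ∣ D √d`, which reads `2d ∣ c₀` and `2 ∣ c₁` on coordinates.
-/

theorem Int.not_isSquare_of_squarefree {d : ℤ} (hsf : Squarefree d) (hd1 : d ≠ 1) :
    ¬IsSquare d := by
  rintro ⟨a, rfl⟩
  rcases Int.isUnit_iff.mp (hsf a dvd_rfl) with rfl | rfl <;> simp at hd1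

theorem map_one_eq_zero_of_leibniz {A : Type*} [Ring A] (σ τ : A →+* A) (D : A → A)
    (hD : ∀ x y, D (x * y) = D x * τ y + σ x * D y) : D 1 = 0 := by
  simpa using hD 1 1

namespace Zsqrtd

variable {d : ℤ}

theorem eq_sqrtd_or_eq_neg_sqrtd_of_mul_self_eq (hd : ¬IsSquare d) {z : ℤ√d}
    (hz : z * z = d) : z = sqrtd ∨ z = -sqrtd := by
  have hre : z.re * z.re + d * z.im * z.im = d := by simpa using congrArg re hz
  have him : z.re * z.im + z.im * z.re = 0 := by simpa using congrArg im hz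
  have hd0 : d ≠ 0 := by rintro rfl; exact hd IsSquare.zero
  rcases mul_eq_zero.mp (by linarith : z.re * z.im = 0) with h | h
  · have him_sq : z.im * z.im = 1 := by
      apply mul_left_cancel₀ hd0
      linear_combination hre - z.re * h
    rcases mul_self_eq_one_iff.mp him_sq with h' | h'
    · exact Or.inl (by ext <;> simp [h, h'])
    · exact Or.inr (by ext <;> simp [h, h'])
  · exact absurd ⟨z.re, by simpa [h] using hre.symm⟩ hd

theorem map_sqrtd_eq_or_eq_neg (hd : ¬IsSquare d) (σ : ℤ√d →+* ℤ√d) :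
    σ sqrtd = sqrtd ∨ σ sqrtd = -sqrtd :=
  eq_sqrtd_or_eq_neg_sqrtd_of_mul_self_eq hd (by rw [← map_mul, dmuld, map_intCast])

theorem map_sqrtd_sub_map_sqrtd_of_ne (hd : ¬IsSquare d) {σ τ : ℤ√d →+* ℤ√d} (hστ : σ ≠ τ) :
    τ sqrtd - σ sqrtd = 2 * sqrtd ∨ τ sqrtd - σ sqrtd = -(2 * sqrtd) := by
  have hne : σ sqrtd ≠ τ sqrtd := fun h => hστ (hom_ext σ τ h)
  rcases map_sqrtd_eq_or_eq_neg hd σ with hσ | hσ <;>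
    rcases map_sqrtd_eq_or_eq_neg hd τ with hτ | hτ <;> rw [hσ, hτ] at hne ⊢
  · exact absurd rfl hne
  · exact Or.inr (by ring)
  · exact Or.inl (by ring)
  · exact absurd rfl hne

theorem intCast_mul_sqrtd_dvd_iff (m : ℤ) (c : ℤ√d) :
    (m : ℤ√d) * sqrtd ∣ c ↔ m * d ∣ c.re ∧ m ∣ c.im := by
  constructor
  · rintro ⟨β, rfl⟩
    exact ⟨⟨β.im, by simp only [re_mul, im_mul, re_intCast, im_intCast, re_sqrtd, im_sqrtd]; ring⟩,
      ⟨β.re, by simp⟩⟩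
  · rintro ⟨⟨k, hk⟩, ⟨l, hl⟩⟩
    refine ⟨⟨l, k⟩, ?_⟩
    ext <;> simp only [re_mul, im_mul, re_intCast, im_intCast, re_sqrtd, im_sqrtd, hk, hl] <;> ring

theorem map_eq_re_smul_add_im_smul {M F : Type*} [AddCommGroup M] [FunLike F (ℤ√d) M]
    [AddMonoidHomClass F (ℤ√d) M] (f : F) (x : ℤ√d) :
    f x = x.re • f 1 + x.im • f sqrtd := by
  have hx : x = x.re • (1 : ℤ√d) + x.im • sqrtd := by ext <;> simp
  conv_lhs => rw [hx]
  rw [map_add, map_zsmul, map_zsmul]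

theorem exists_forall_eq_mul_sub_iff_dvd {F : Type*} [FunLike F (ℤ√d) (ℤ√d)]
    [AddMonoidHomClass F (ℤ√d) (ℤ√d)] (σ τ : ℤ√d →+* ℤ√d) (D : F) (hD1 : D 1 = 0) :
    (∃ β : ℤ√d, ∀ x, D x = β * (τ x - σ x)) ↔ τ sqrtd - σ sqrtd ∣ D sqrtd := by
  constructor
  · rintro ⟨β, hβ⟩
    exact ⟨β, by rw [hβ, mul_comm]⟩
  · rintro ⟨β, hβ⟩
    refine ⟨β, fun x => ?_⟩
    rw [map_eq_re_smul_add_im_smul D, map_eq_re_smul_add_im_smul τ, map_eq_re_smul_add_im_smul σ,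
      hD1, hβ]
    simp only [zsmul_eq_mul, map_one]
    ring

end Zsqrtd

open Zsqrtd

theorem stmt7_general (d : ℤ) (hsf : Squarefree d) (hd1 : d ≠ 1)
    (σ τ : Zsqrtd d →+* Zsqrtd d) (hστ : σ ≠ τ)
    (D : Zsqrtd d →ₗ[ℤ] Zsqrtd d)
    (hD : ∀ x y : Zsqrtd d, D (x * y) = D x * τ y + σ x * D y)
    (c₀ c₁ : ℤ) (hc : D Zsqrtd.sqrtd = ⟨c₀, c₁⟩) :
    (∃ β : Zsqrtd d, ∀ x : Zsqrtd d, D x = β * (τ x - σ x)) ↔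
      ((2 * d) ∣ c₀ ∧ (2 : ℤ) ∣ c₁) := by
  have hd : ¬IsSquare d := Int.not_isSquare_of_squarefree hsf hd1
  rw [exists_forall_eq_mul_sub_iff_dvd σ τ D (map_one_eq_zero_of_leibniz σ τ D hD), hc]
  have h2 : (2 : ℤ√d) * sqrtd ∣ ⟨c₀, c₁⟩ ↔ 2 * d ∣ c₀ ∧ 2 ∣ c₁ := by
    exact_mod_cast intCast_mul_sqrtd_dvd_iff (d := d) 2 ⟨c₀, c₁⟩
  rcases map_sqrtd_sub_map_sqrtd_of_ne hd hστ with h | h <;> simpa only [h, neg_dvd] using h2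

/-- Let `d` be a squarefree integer with `d ≠ 1` and `d ≢ 1 (mod 4)`, and
consider the ring `ℤ[√d]` (`Zsqrtd d`, a free `ℤ`-module with basis `{1, √d}`).  Let `σ`, `τ`
be two distinct ring endomorphisms of `ℤ[√d]`, let `D` be a `(σ,τ)`-derivation, and write
`D √d = c₀ + c₁ √d`.  Then `D` is inner if and only if `2d ∣ c₀` and `2 ∣ c₁`. -/
theorem stmt7 (d : ℤ) (hsf : Squarefree d) (hd1 : d ≠ 1) (hmod : d % 4 ≠ 1)
    (σ τ : Zsqrtd d →+* Zsqrtd d) (hστ : σ ≠ τ)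
    (D : Zsqrtd d →ₗ[ℤ] Zsqrtd d)
    (hD : ∀ x y : Zsqrtd d, D (x * y) = D x * τ y + σ x * D y)
    (c₀ c₁ : ℤ) (hc : D Zsqrtd.sqrtd = ⟨c₀, c₁⟩) :
    (∃ β : Zsqrtd d, ∀ x : Zsqrtd d, D x = β * (τ x - σ x)) ↔
      ((2 * d) ∣ c₀ ∧ (2 : ℤ) ∣ c₁) :=
  stmt7_general d hsf hd1 σ τ hστ D hD c₀ c₁ hc
end

section
/- Let d be a squarefree integer with d ≠ 1 and d ≡ 1 (mod 4), let K = ℚ(√d) and let O_K = ℤ[ω] be its ring of integers, where ω = (1+√d)/2, so that {1, ω} is a ℤ-basis of O_K. Let σ and τ be two distinct ring endomorphisms of O_K, let D : O_K → O_K be a (σ,τ)-derivation, and write D(ω) = c₀ + c₁ω with c₀, c₁ ∈ ℤ. Then D is inner if and only if d divides −c₀ + c₁·(d−1)/2 and d divides 2c₀ + c₁. -/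
/-!
Every `x ∈ 𝓞 K` is `a + bω` with `a, b ∈ ℤ`: writing `x = u + v√d` with `v ≠ 0`, the minimal
polynomial `X² - 2uX + (u² - dv²)` has integer coefficients, squarefreeness of `d` then forces
`2v ∈ ℤ`, and oddness of `d` forces `2u ≡ 2v (mod 2)`. With `d = 4m + 1` we have `ω² = ω + m`.

A `(σ,τ)`-derivation kills `ℤ`, so `D (a + bω) = b D ω` and `τ (a + bω) - σ (a + bω) = b (τω - σω)`;
hence `D` is inner iff `τω - σω ∣ D ω`. As `σω ≠ τω` are both roots of `X² - X - m`, we get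
`τω - σω = ±(2ω - 1)`. Finally `(2ω - 1)² = d`, so `2ω - 1 ∣ c₀ + c₁ω` iff `d` divides both
coordinates of `(c₀ + c₁ω)(2ω - 1) = (-c₀ + 2mc₁) + (2c₀ + c₁)ω`.
-/

open NumberField Polynomial

def IsTwistedDerivation {A : Type*} [CommRing A] (σ τ : A →+* A) (D : A →ₗ[ℤ] A) : Prop :=
  ∀ x y, D (x * y) = D x * τ y + σ x * D y

namespace IsTwistedDerivation

variable {A : Type*} [CommRing A] {σ τ : A →+* A} {D : A →ₗ[ℤ] A}

theorem map_one (hD : IsTwistedDerivation σ τ D) : D 1 = 0 := by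
  have h := hD 1 1
  simp only [mul_one, _root_.map_one, one_mul] at h
  exact left_eq_add.mp h

variable {ω : A}

theorem map_intCast_add_mul (hD : IsTwistedDerivation σ τ D) (a b : ℤ) :
    D (a + b * ω) = b * D ω := by
  rw [← zsmul_one, ← zsmul_eq_mul, map_add, map_zsmul, map_zsmul, hD.map_one,
    smul_zero, zero_add, zsmul_eq_mul]

theorem isInner_iff_dvd (hD : IsTwistedDerivation σ τ D)
    (hspan : ∀ x : A, ∃ a b : ℤ, x = a + b * ω) :
    (∃ β : A, ∀ x, D x = β * (τ x - σ x)) ↔ τ ω - σ ω ∣ D ω := by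
  constructor
  · rintro ⟨β, hβ⟩
    exact ⟨β, by rw [hβ, mul_comm]⟩
  · rintro ⟨β, hβ⟩
    refine ⟨β, fun x ↦ ?_⟩
    obtain ⟨a, b, rfl⟩ := hspan x
    simp only [hD.map_intCast_add_mul, map_add, map_mul, map_intCast, hβ]
    ring

end IsTwistedDerivation

section QuadraticOrder

variable {A : Type*} [CommRing A] {ω : A} {m : ℤ}

theorem associated_sub_two_mul_sub_one [IsDomain A] (hspan : ∀ x : A, ∃ a b : ℤ, x = a + b * ω)
    (hω : ω ^ 2 = ω + m) {σ τ : A →+* A} (hστ : σ ≠ τ) :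
    Associated (τ ω - σ ω) (2 * ω - 1) := by
  have hne : σ ω ≠ τ ω := fun h ↦ hστ <| RingHom.ext fun x ↦ by
    obtain ⟨a, b, rfl⟩ := hspan x
    simp only [map_add, map_mul, map_intCast, h]
  have hσ : σ ω ^ 2 = σ ω + m := by simpa using congrArg σ hω
  have hτ : τ ω ^ 2 = τ ω + m := by simpa using congrArg τ hω
  have hsum : σ ω + τ ω = 1 := by
    have : (σ ω - τ ω) * (σ ω + τ ω - 1) = 0 := by linear_combination hσ - hτ
    linear_combination (mul_eq_zero.mp this).resolve_left (sub_ne_zero.mpr hne)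
  have hsq : (τ ω - σ ω) ^ 2 = (2 * ω - 1) ^ 2 := by
    linear_combination (σ ω + τ ω + 1 - 4 * σ ω) * hsum + 4 * hσ - 4 * hω
  rcases sq_eq_sq_iff_eq_or_eq_neg.mp hsq with h | h
  · rw [h]
  · rw [h]
    exact (Associated.refl _).neg_left

theorem two_mul_sub_one_dvd_iff (hspan : ∀ x : A, ∃ a b : ℤ, x = a + b * ω)
    (hind : LinearIndependent ℤ ![1, ω]) (hω : ω ^ 2 = ω + m) (c₀ c₁ : ℤ) :
    2 * ω - 1 ∣ c₀ + c₁ * ω ↔ 4 * m + 1 ∣ -c₀ + c₁ * (2 * m) ∧ 4 * m + 1 ∣ 2 * c₀ + c₁ := by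
  have hmul (a b : ℤ) : (2 * ω - 1) * (a + b * ω) = (-a + 2 * m * b : ℤ) + (2 * a + b : ℤ) * ω := by
    push_cast
    linear_combination 2 * (b : A) * hω
  have hcoords : 2 * ω - 1 ∣ c₀ + c₁ * ω ↔ ∃ a b : ℤ, c₀ = -a + 2 * m * b ∧ c₁ = 2 * a + b := by
    constructor
    · rintro ⟨γ, hγ⟩
      obtain ⟨a, b, rfl⟩ := hspan γ
      rw [hmul] at hγ
      obtain ⟨h₀, h₁⟩ :=
        LinearIndependent.pair_iff.mp hind (c₀ - (-a + 2 * m * b)) (c₁ - (2 * a + b))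
          (by simp only [zsmul_eq_mul]; push_cast at hγ ⊢; linear_combination hγ)
      exact ⟨a, b, by linarith, by linarith⟩
    · rintro ⟨a, b, rfl, rfl⟩
      exact ⟨a + b * ω, (hmul a b).symm⟩
  rw [hcoords]
  constructor
  · rintro ⟨a, b, rfl, rfl⟩
    exact ⟨⟨a, by ring⟩, ⟨b, by ring⟩⟩
  · rintro ⟨⟨a, ha⟩, ⟨b, hb⟩⟩
    have hd : 4 * m + 1 ≠ 0 := by omega
    refine ⟨a, b, mul_left_cancel₀ hd ?_, mul_left_cancel₀ hd ?_⟩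
    · linear_combination -ha + 2 * m * hb
    · linear_combination 2 * ha + hb

end QuadraticOrder

theorem Rat.exists_intCast_eq_of_squarefree_mul_sq {d : ℤ} (hd : Squarefree d) {q : ℚ} {n : ℤ}
    (h : d * q ^ 2 = n) : ∃ b : ℤ, q = b := by
  have hZ : d * q.num ^ 2 = n * (q.den : ℤ) ^ 2 := by
    have : (d : ℚ) * q.num ^ 2 = n * (q.den : ℚ) ^ 2 := by
      rw [← Rat.mul_den_eq_num, mul_pow, ← mul_assoc, h]
    exact_mod_cast this
  have hN : d.natAbs * q.num.natAbs ^ 2 = n.natAbs * q.den ^ 2 := by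
    simpa [Int.natAbs_mul, Int.natAbs_pow] using congrArg Int.natAbs hZ
  have hdvd : q.den * q.den ∣ d.natAbs := by
    rw [← sq]
    exact (q.reduced.symm.pow 2 2).dvd_of_dvd_mul_right ⟨n.natAbs, by rw [hN, mul_comm]⟩
  have hden : q.den = 1 := Nat.isUnit_iff.mp (Int.squarefree_natAbs.mpr hd _ hdvd)
  exact ⟨q.num, by rw [← Rat.mul_den_eq_num, hden, Nat.cast_one, mul_one]⟩

theorem Rat.sq_ne_intCast_of_squarefree {d : ℤ} (hd : Squarefree d) (hd1 : d ≠ 1) (q : ℚ) :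
    q ^ 2 ≠ d := by
  intro h
  obtain ⟨b, rfl⟩ := Rat.exists_intCast_eq_of_squarefree_mul_sq squarefree_one (n := d)
    (by rw [Int.cast_one, one_mul, h])
  have hb : d = b * b := by rw [← sq]; exact_mod_cast h.symm
  rcases Int.isUnit_iff.mp (hd b ⟨1, by rw [hb, mul_one]⟩) with rfl | rfl <;> simp_all

theorem Rat.exists_int_coords_of_trace_norm {d : ℤ} (hd : Squarefree d) (hodd : Odd d)
    {u v : ℚ} {g n : ℤ} (hg : 2 * u = g) (hn : u ^ 2 - d * v ^ 2 = n) :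
    ∃ a b : ℤ, u = a + b / 2 ∧ v = b / 2 := by
  obtain ⟨b, hb⟩ := Rat.exists_intCast_eq_of_squarefree_mul_sq hd (q := 2 * v) (n := g ^ 2 - 4 * n)
    (by push_cast; linear_combination -4 * hn + (2 * u + g) * hg)
  have hrel : g ^ 2 - d * b ^ 2 = 2 * (2 * n) := by
    have : (g : ℚ) ^ 2 - d * b ^ 2 = 2 * (2 * n) := by
      rw [← hb, ← hg, ← hn]; ring
    exact_mod_cast this
  have heven : Even (g - b) := by
    have := congrArg Even hrel
    simp only [even_two_mul, Int.even_sub, Int.even_mul, Int.even_pow,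
      Int.not_even_iff_odd.mpr hodd] at this
    simpa [Int.even_sub] using this
  obtain ⟨a, ha⟩ := heven
  refine ⟨a, b, ?_, by linarith⟩
  have : (g : ℚ) - b = a + a := by exact_mod_cast ha
  linarith

section SqrtField

variable {K : Type*} [Field K] [CharZero K] {d : ℤ} {s : K}

theorem ratCast_ne_of_sq_eq (hd : ∀ q : ℚ, q ^ 2 ≠ d) (hs : s ^ 2 = d) (q : ℚ) : (q : K) ≠ s := by
  rintro rfl
  exact hd q (by exact_mod_cast hs)

theorem minpoly_ratCast_add_mul (hd : ∀ q : ℚ, q ^ 2 ≠ d) (hs : s ^ 2 = d) (u : ℚ) {v : ℚ}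
    (hv : v ≠ 0) :
    minpoly ℚ ((u : K) + v * s) = X ^ 2 - C (2 * u) * X + C (u ^ 2 - d * v ^ 2) := by
  have hdeg : (X ^ 2 - C (2 * u) * X + C (u ^ 2 - d * v ^ 2)).natDegree = 2 := by compute_degree!
  refine (minpoly.eq_of_irreducible_of_monic ?_ ?_ (by monicity!)).symm
  · refine irreducible_of_degree_le_three_of_not_isRoot (by rw [hdeg]; decide) fun r hr ↦ ?_
    refine hd ((r - u) / v) ?_
    simp only [IsRoot, eval_add, eval_sub, eval_mul, eval_pow, eval_C, eval_X] at hr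
    field_simp
    linear_combination hr
  · simp only [map_add, map_sub, map_mul, map_pow, aeval_C, aeval_X, eq_ratCast]
    push_cast
    linear_combination (v : K) ^ 2 * hs

theorem exists_int_coords_of_isIntegral (hsf : Squarefree d) (hd : ∀ q : ℚ, q ^ 2 ≠ d)
    (hodd : Odd d) (hs : s ^ 2 = d) {u v : ℚ} (hx : IsIntegral ℤ ((u : K) + v * s)) :
    ∃ a b : ℤ, u = a + b / 2 ∧ v = b / 2 := by
  rcases eq_or_ne v 0 with rfl | hv
  · rw [Rat.cast_zero, zero_mul, add_zero, ← eq_ratCast (algebraMap ℚ K),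
      isIntegral_algebraMap_iff (algebraMap ℚ K).injective] at hx
    obtain ⟨a, rfl⟩ := IsIntegrallyClosed.isIntegral_iff.mp hx
    exact ⟨a, 0, by simp, by simp⟩
  · have hmin := (minpoly_ratCast_add_mul hd hs u hv).symm.trans
      (minpoly.isIntegrallyClosed_eq_field_fractions' ℚ hx)
    have h₁ := congrArg (coeff · 1) hmin
    have h₀ := congrArg (coeff · 0) hmin
    simp only [coeff_map, eq_intCast, coeff_add, coeff_sub, coeff_C_mul_X, coeff_X_pow,
      coeff_C] at h₀ h₁
    norm_num at h₀ h₁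
    exact Rat.exists_int_coords_of_trace_norm hsf hodd (g := -_) (by push_cast; linarith) h₀

theorem exists_ratCast_add_mul_of_finrank_eq_two (hdeg : Module.finrank ℚ K = 2)
    (hd : ∀ q : ℚ, q ^ 2 ≠ d) (hs : s ^ 2 = d) (x : K) : ∃ u v : ℚ, x = u + v * s := by
  have hli : LinearIndependent ℚ ![(1 : K), s] := by
    refine LinearIndependent.pair_iff' one_ne_zero |>.mpr fun q hq ↦ ratCast_ne_of_sq_eq hd hs q ?_
    rwa [Rat.smul_one_eq_cast] at hq
  have hx : x ∈ Submodule.span ℚ (Set.range ![(1 : K), s]) := by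
    rw [hli.span_eq_top_of_card_eq_finrank (by simp [hdeg])]
    trivial
  obtain ⟨v, u, rfl⟩ := Submodule.mem_span_pair.mp (by simpa [Set.pair_comm] using hx)
  exact ⟨u, v, by rw [Rat.smul_def, Rat.smul_def, mul_one, add_comm]⟩

end SqrtField

namespace NumberField.RingOfIntegers

variable {K : Type*} [Field K] [NumberField K] {d : ℤ} {s : K} {ω : 𝓞 K}

theorem exists_eq_intCast_add_mul (hdeg : Module.finrank ℚ K = 2) (hsf : Squarefree d)
    (hd : ∀ q : ℚ, q ^ 2 ≠ d) (hodd : Odd d) (hs : s ^ 2 = d) (hω : (ω : K) = (1 + s) / 2)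
    (x : 𝓞 K) : ∃ a b : ℤ, x = a + b * ω := by
  obtain ⟨u, v, hx⟩ := exists_ratCast_add_mul_of_finrank_eq_two hdeg hd hs (x : K)
  obtain ⟨a, b, rfl, rfl⟩ :=
    exists_int_coords_of_isIntegral hsf hd hodd hs (by rw [← hx]; exact x.isIntegral_coe)
  refine ⟨a, b, RingOfIntegers.ext ?_⟩
  simp only [map_add, map_mul, map_intCast, hx, hω]
  push_cast
  ring

theorem linearIndependent_one_omega (hd : ∀ q : ℚ, q ^ 2 ≠ d) (hs : s ^ 2 = d)
    (hω : (ω : K) = (1 + s) / 2) : LinearIndependent ℤ ![1, ω] := by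
  refine LinearIndependent.pair_iff.mpr fun a b h ↦ ?_
  have hK : (a : K) + b * ((1 + s) / 2) = 0 := by
    simpa [zsmul_eq_mul, hω] using congrArg (algebraMap (𝓞 K) K) h
  obtain rfl : b = 0 := by
    by_contra hb
    refine ratCast_ne_of_sq_eq hd hs (-(2 * a + b) / b) ?_
    push_cast
    field_simp
    linear_combination -2 * hK
  exact ⟨by simpa using hK, rfl⟩

theorem sq_eq_self_add_intCast {m : ℤ} (hm : d = 4 * m + 1) (hs : s ^ 2 = d)
    (hω : (ω : K) = (1 + s) / 2) : ω ^ 2 = ω + m := by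
  refine RingOfIntegers.ext ?_
  simp only [map_pow, map_add, map_intCast, hω]
  rw [hm] at hs
  push_cast at hs
  linear_combination hs / 4

end NumberField.RingOfIntegers

/-- Let `d` be a squarefree integer, `d ≠ 1`, `d ≡ 1 (mod 4)`, let
`K = ℚ(√d)` and let `O_K = ℤ[ω]` be its ring of integers, where `ω = (1+√d)/2` (so `{1, ω}` is a
`ℤ`-basis of `O_K`).  Let `σ`, `τ` be two distinct ring endomorphisms of `O_K`, `D` a
`(σ,τ)`-derivation, and write `D ω = c₀ + c₁ ω`.  Then `D` is inner if and only if
`d ∣ -c₀ + c₁ * (d-1)/2` and `d ∣ 2c₀ + c₁`. -/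
theorem stmt8 (d : ℤ) (hsf : Squarefree d) (hd1 : d ≠ 1) (hmod : d % 4 = 1)
    (K : Type*) [Field K] [NumberField K]
    (hdeg : Module.finrank ℚ K = 2) (s : K) (hs : s ^ 2 = (d : K))
    (ω : 𝓞 K) (hω : (ω : K) = (1 + s) / 2)
    (σ τ : 𝓞 K →+* 𝓞 K) (hστ : σ ≠ τ)
    (D : 𝓞 K →ₗ[ℤ] 𝓞 K)
    (hD : ∀ x y : 𝓞 K, D (x * y) = D x * τ y + σ x * D y)
    (c₀ c₁ : ℤ) (hc : D ω = (c₀ : 𝓞 K) + (c₁ : 𝓞 K) * ω) :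
    (∃ β : 𝓞 K, ∀ x : 𝓞 K, D x = β * (τ x - σ x)) ↔
      (d ∣ (-c₀ + c₁ * ((d - 1) / 2)) ∧ d ∣ (2 * c₀ + c₁)) := by
  obtain ⟨m, hm⟩ : ∃ m, d = 4 * m + 1 := ⟨d / 4, by omega⟩
  have hd := Rat.sq_ne_intCast_of_squarefree hsf hd1
  have hspan := RingOfIntegers.exists_eq_intCast_add_mul hdeg hsf hd ⟨2 * m, by omega⟩ hs hω
  have hω2 := RingOfIntegers.sq_eq_self_add_intCast hm hs hω
  rw [IsTwistedDerivation.isInner_iff_dvd hD hspan,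
    (associated_sub_two_mul_sub_one hspan hω2 hστ).dvd_iff_dvd_left, hc,
    two_mul_sub_one_dvd_iff hspan (RingOfIntegers.linearIndependent_one_omega hd hs hω) hω2,
    show (d - 1) / 2 = 2 * m by omega, hm]
end

section
/- Let p be an odd prime, ζ a primitive p-th root of unity, and σ, τ two distinct ring endomorphisms of ℤ[ζ]. Let D : ℤ[ζ] → ℤ[ζ] be a ℤ-linear map with D(1) = 0 such that D(ζ^k) = (Σ_{(i,j): i+j=k−1} σ(ζ)^i · τ(ζ)^j) · D(ζ) for all k ∈ {1, 2, ..., p−2}, where the sum runs over all pairs of non-negative integers (i,j) with i + j = k − 1. Then D is a (σ,τ)-derivation of ℤ[ζ]. -/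
/-!
Put `c = σ ζ - τ ζ`; it is nonzero because `ζ` generates `ℤ[ζ]` as a ring, so `σ = τ` otherwise.
By the telescoping identity `(Σ_{i+j=k-1} a^i b^j)(a - b) = a^k - b^k` the hypothesis says
`c * D (ζ^k) = (σ (ζ^k) - τ (ζ^k)) * D ζ` for `k ≤ p - 2`. Both sides are `ℤ`-linear in `ζ^k`, and
`1, ζ, …, ζ^(p-2)` span `ℤ[ζ]` since `ζ^(p-1) = -(1 + ζ + ⋯ + ζ^(p-2))`, so
`c * D x = (σ x - τ x) * D ζ` for every `x`. As `x ↦ σ x - τ x` is a `(σ, τ)`-derivation, so is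
`c • D`, and `c` cancels in the domain `ℤ[ζ]`.
-/

open Finset

theorem span_image_pow_Iio_pred_eq_top {R A : Type*} [CommRing R] [Ring A] [Algebra R A] {z : A}
    {p : ℕ} (hp : 0 < p) (hadj : Algebra.adjoin R {z} = ⊤) (hzp : z ^ p = 1)
    (hsum : ∑ k ∈ range p, z ^ k = 0) :
    Submodule.span R ((z ^ ·) '' Set.Iio (p - 1)) = ⊤ := by
  set S := Submodule.span R ((z ^ ·) '' Set.Iio (p - 1))
  have hlt : ∀ k < p - 1, z ^ k ∈ S := fun k hk => Submodule.subset_span ⟨k, hk, rfl⟩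
  have hpow : ∀ n, z ^ n ∈ S := by
    intro n
    rw [pow_eq_pow_mod n hzp]
    rcases (Nat.le_sub_one_of_lt (Nat.mod_lt n hp)).lt_or_eq with h | h
    · exact hlt _ h
    · have hsplit : ∑ k ∈ range (p - 1), z ^ k + z ^ (p - 1) = 0 := by
        rwa [← sum_range_succ, Nat.sub_add_cancel hp]
      rw [h, eq_neg_of_add_eq_zero_right hsplit]
      exact S.neg_mem (S.sum_mem fun k hk => hlt k (mem_range.1 hk))
  refine eq_top_iff.2 fun x _ => ?_
  have hx : x ∈ Subalgebra.toSubmodule (Algebra.adjoin R {z}) := hadj ▸ Algebra.mem_top (R := R)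
  rw [Algebra.adjoin_eq_span, ← Submonoid.powers_eq_closure] at hx
  exact Submodule.span_le.2 (by rintro _ ⟨n, rfl⟩; exact hpow n) hx

theorem adjoin_singleton_eq_top_of_coe_eq {R A : Type*} [CommSemiring R] [Semiring A]
    [Algebra R A] {a : A} {z : Algebra.adjoin R {a}} (hz : (z : A) = a) :
    Algebra.adjoin R {z} = ⊤ := by
  convert Algebra.adjoin_adjoin_coe_preimage (R := R) (s := {a})
  ext w
  rw [Set.mem_preimage, Set.mem_singleton_iff, Set.mem_singleton_iff, Subtype.ext_iff, hz]

theorem sum_antidiagonal_pred_mul_sub {R : Type*} [CommRing R] (a b : R) {k : ℕ} (hk : 1 ≤ k) :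
    (∑ ij ∈ antidiagonal (k - 1), a ^ ij.1 * b ^ ij.2) * (a - b) = a ^ k - b ^ k := by
  rw [Nat.sum_antidiagonal_eq_sum_range_succ_mk, Nat.succ_eq_add_one, Nat.sub_add_cancel hk]
  exact geom_sum₂_mul a b k

section TwistedDerivation

variable {A : Type*} [CommRing A] (σ τ : A →+* A)

theorem mul_apply_eq_sub_mul_of_forall_pow_lt (D : A →ₗ[ℤ] A) {z c d : A} {p : ℕ} (hp : 0 < p)
    (hadj : Algebra.adjoin ℤ {z} = ⊤) (hzp : z ^ p = 1) (hsum : ∑ k ∈ range p, z ^ k = 0)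
    (h : ∀ k < p - 1, c * D (z ^ k) = (σ (z ^ k) - τ (z ^ k)) * d) (x : A) :
    c * D x = (σ x - τ x) * d := by
  have hext := LinearMap.ext_on (span_image_pow_Iio_pred_eq_top hp hadj hzp hsum)
    (f := LinearMap.mulLeft ℤ c ∘ₗ D)
    (g := LinearMap.mulRight ℤ d ∘ₗ (σ.toIntAlgHom.toLinearMap - τ.toIntAlgHom.toLinearMap))
    (by rintro _ ⟨k, hk, rfl⟩; exact h k hk)
  exact LinearMap.congr_fun hext x

theorem leibniz_of_mul_apply_eq_sub_mul [IsDomain A] {D : A → A} {c d : A} (hc : c ≠ 0)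
    (h : ∀ x, c * D x = (σ x - τ x) * d) (x y : A) :
    D (x * y) = D x * τ y + σ x * D y := by
  refine mul_left_cancel₀ hc ?_
  rw [h, map_mul, map_mul]
  linear_combination -τ y * h x - σ x * h y

end TwistedDerivation

theorem stmt10_general (p : ℕ) (hp : p.Prime) (ζ : ℂ) (hζ : IsPrimitiveRoot ζ p)
    (z : Algebra.adjoin ℤ ({ζ} : Set ℂ)) (hz : (z : ℂ) = ζ)
    (σ τ : Algebra.adjoin ℤ ({ζ} : Set ℂ) →+* Algebra.adjoin ℤ ({ζ} : Set ℂ))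
    (hστ : σ ≠ τ)
    (D : Algebra.adjoin ℤ ({ζ} : Set ℂ) →ₗ[ℤ] Algebra.adjoin ℤ ({ζ} : Set ℂ))
    (hD1 : D 1 = 0)
    (hDk : ∀ k : ℕ, 1 ≤ k → k ≤ p - 2 →
      D (z ^ k) = (∑ ij ∈ Finset.HasAntidiagonal.antidiagonal (k - 1), σ z ^ ij.1 * τ z ^ ij.2) * D z) :
    ∀ x y, D (x * y) = D x * τ y + σ x * D y := by
  have hadj : Algebra.adjoin ℤ {z} = ⊤ := adjoin_singleton_eq_top_of_coe_eq hz
  have hzp : z ^ p = 1 := Subtype.ext (by push_cast [hz]; exact hζ.pow_eq_one)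
  have hsum : ∑ k ∈ range p, z ^ k = 0 :=
    Subtype.ext (by push_cast [hz]; exact hζ.geom_sum_eq_zero hp.one_lt)
  have hc : σ z - τ z ≠ 0 := sub_ne_zero.2 fun h => hστ <| RingHom.ext <| AlgHom.congr_fun <|
    AlgHom.ext_of_adjoin_eq_top hadj (φ₁ := σ.toIntAlgHom) (φ₂ := τ.toIntAlgHom) (by simpa using h)
  refine leibniz_of_mul_apply_eq_sub_mul σ τ (d := D z) hc <|
    mul_apply_eq_sub_mul_of_forall_pow_lt σ τ D hp.pos hadj hzp hsum fun k hk => ?_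
  rcases k.eq_zero_or_pos with rfl | hk0
  · simp [hD1]
  · rw [hDk k hk0 (by omega), map_pow, map_pow, ← sum_antidiagonal_pred_mul_sub _ _ hk0]
    ring

/-- Let `p` be an odd prime, `ζ` a primitive `p`-th root of unity, and `σ`, `τ`
two distinct ring endomorphisms of `ℤ[ζ]`.  Let `D : ℤ[ζ] → ℤ[ζ]` be a `ℤ`-linear map with
`D 1 = 0` such that `D (ζ^k) = (Σ_{i+j=k-1} σ(ζ)^i * τ(ζ)^j) * D ζ` for all
`k ∈ {1, …, p-2}`.  Then `D` is a `(σ,τ)`-derivation. -/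
theorem stmt10 (p : ℕ) (hp : p.Prime) (hodd : Odd p) (ζ : ℂ) (hζ : IsPrimitiveRoot ζ p)
    (z : Algebra.adjoin ℤ ({ζ} : Set ℂ)) (hz : (z : ℂ) = ζ)
    (σ τ : Algebra.adjoin ℤ ({ζ} : Set ℂ) →+* Algebra.adjoin ℤ ({ζ} : Set ℂ))
    (hστ : σ ≠ τ)
    (D : Algebra.adjoin ℤ ({ζ} : Set ℂ) →ₗ[ℤ] Algebra.adjoin ℤ ({ζ} : Set ℂ))
    (hD1 : D 1 = 0)
    (hDk : ∀ k : ℕ, 1 ≤ k → k ≤ p - 2 →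
      D (z ^ k) = (∑ ij ∈ Finset.HasAntidiagonal.antidiagonal (k - 1), σ z ^ ij.1 * τ z ^ ij.2) * D z) :
    ∀ x y, D (x * y) = D x * τ y + σ x * D y :=
  stmt10_general p hp ζ hζ z hz σ τ hστ D hD1 hDk
end

section
/- Let p be an odd prime, ζ a primitive p-th root of unity, and σ, τ two distinct ring endomorphisms of ℤ[ζ]. Let D : ℤ[ζ] → ℤ[ζ] be a ℤ-linear map with D(1) = 0. Then D is a (σ,τ)-derivation if and only if D(ζ^k) = (Σ_{(i,j): i+j=k−1} σ(ζ)^i · τ(ζ)^j) · D(ζ) for all k ∈ {1, 2, ..., p−2}, where the sum runs over all pairs of non-negative integers (i,j) with i + j = k − 1. -/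
/-!
Expanding `D (a * b) = D (b * a)` shows that a `(σ,τ)`-derivation of a commutative ring satisfies
`(σ a - τ a) * D b = (σ b - τ b) * D a`; conversely, in a domain with `σ z ≠ τ z`, this identity
for `b = z` forces the twisted Leibniz rule. The identity is `ℤ`-linear in `a`, so it suffices to
check it on powers of the generator `z = ζ`, and since `1 + ζ + ⋯ + ζ^(p-1) = 0` (hence `ζ^p = 1`)
on `ζ^0, …, ζ^(p-2)`. For `k ≥ 1`, the identity at `ζ^k` is the stated formula multiplied by
`σ ζ - τ ζ`, via `σ ζ^k - τ ζ^k = (∑_{i+j=k-1} σ ζ^i τ ζ^j) (σ ζ - τ ζ)`.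
-/

open Finset

section TwistedLeibniz

variable {A : Type*} [CommRing A] (σ τ : A →+* A) (D : A → A)

theorem sub_mul_apply_comm_of_twisted_leibniz
    (hD : ∀ x y, D (x * y) = D x * τ y + σ x * D y) (a b : A) :
    (σ a - τ a) * D b = (σ b - τ b) * D a := by
  have hab := hD a b
  have hba := hD b a
  rw [mul_comm b a] at hba
  linear_combination hba - hab

theorem twisted_leibniz_iff [IsDomain A] {z : A} (hz : σ z ≠ τ z) :
    (∀ x y, D (x * y) = D x * τ y + σ x * D y) ↔
      ∀ x, (σ x - τ x) * D z = (σ z - τ z) * D x := by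
  refine ⟨fun hD x => sub_mul_apply_comm_of_twisted_leibniz σ τ D hD x z, fun h x y => ?_⟩
  refine mul_left_cancel₀ (sub_ne_zero.mpr hz) ?_
  have hxy := h (x * y)
  rw [map_mul, map_mul] at hxy
  linear_combination τ y * h x + σ x * h y - hxy

end TwistedLeibniz

section Generator

variable {R A : Type*} [CommRing R] [CommRing A] [Algebra R A] {z : A}

theorem span_range_pow_eq_top_of_adjoin_eq_top (hgen : Algebra.adjoin R {z} = ⊤) :
    Submodule.span R (Set.range (z ^ ·)) = ⊤ := by
  rw [← Submonoid.coe_powers, Submonoid.powers_eq_closure, ← Algebra.adjoin_eq_span, hgen,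
    Algebra.top_toSubmodule]

theorem Submodule.eq_top_of_pow_mem (hgen : Algebra.adjoin R {z} = ⊤) {n : ℕ} (hn : 0 < n)
    (hsum : ∑ i ∈ range n, z ^ i = 0) (S : Submodule R A) (hS : ∀ k < n - 1, z ^ k ∈ S) :
    S = ⊤ := by
  have hzn : z ^ n = 1 := by
    rw [← sub_eq_zero, ← geom_sum_mul, hsum, zero_mul]
  have hlast : z ^ (n - 1) ∈ S := by
    obtain ⟨m, rfl⟩ := Nat.exists_eq_add_of_lt hn
    rw [zero_add, sum_range_succ, add_eq_zero_iff_eq_neg] at hsum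
    simpa [hsum] using S.neg_mem (S.sum_mem fun k (hk : k ∈ range m) => hS k (by simpa using hk))
  have hpow : ∀ k, z ^ k ∈ S := by
    intro k
    rw [← Nat.div_add_mod k n, pow_add, pow_mul, hzn, one_pow, one_mul]
    rcases Nat.lt_or_ge (k % n) (n - 1) with h | h
    · exact hS _ h
    · rwa [show k % n = n - 1 by have := Nat.mod_lt k hn; omega]
  rw [eq_top_iff, ← span_range_pow_eq_top_of_adjoin_eq_top hgen, Submodule.span_le]
  rintro _ ⟨k, rfl⟩
  exact hpow k

theorem RingHom.eq_of_eq_of_adjoin_singleton_eq_top {B : Type*} [Ring B]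
    (hgen : Algebra.adjoin ℤ {z} = ⊤) {f g : A →+* B} (h : f z = g z) : f = g :=
  RingHom.toIntAlgHom_injective (AlgHom.ext_of_adjoin_eq_top hgen (by simpa using h))

theorem sub_mul_apply_eq_of_pow_lt (hgen : Algebra.adjoin ℤ {z} = ⊤) {n : ℕ} (hn : 0 < n)
    (hsum : ∑ i ∈ range n, z ^ i = 0) (σ τ : A →+* A) (D : A →ₗ[ℤ] A)
    (h : ∀ k < n - 1, (σ z ^ k - τ z ^ k) * D z = (σ z - τ z) * D (z ^ k)) (x : A) :
    (σ x - τ x) * D z = (σ z - τ z) * D x := by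
  let S := LinearMap.eqLocus
    (LinearMap.mulRight ℤ (D z) ∘ₗ (σ.toIntAlgHom.toLinearMap - τ.toIntAlgHom.toLinearMap))
    ((σ z - τ z) • D)
  have hS : S = ⊤ := Submodule.eq_top_of_pow_mem hgen hn hsum S fun k hk => by
    simpa [S] using h k hk
  have hx : x ∈ S := hS ▸ Submodule.mem_top
  simpa [S] using hx

end Generator

theorem eq_sum_antidiagonal_mul_iff {A : Type*} [CommRing A] [IsDomain A] {a b u d : A}
    (hab : a ≠ b) {k : ℕ} (hk : 1 ≤ k) :
    u = (∑ ij ∈ antidiagonal (k - 1), a ^ ij.1 * b ^ ij.2) * d ↔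
      (a ^ k - b ^ k) * d = (a - b) * u := by
  have hgeom : (∑ ij ∈ antidiagonal (k - 1), a ^ ij.1 * b ^ ij.2) * (a - b) = a ^ k - b ^ k := by
    rw [Nat.sum_antidiagonal_eq_sum_range_succ (fun i j => a ^ i * b ^ j),
      Nat.succ_eq_add_one, Nat.sub_add_cancel hk]
    exact geom_sum₂_mul a b k
  rw [← hgeom, ← mul_right_inj' (sub_ne_zero.mpr hab)]
  exact ⟨fun h => by linear_combination -h, fun h => by linear_combination -h⟩

theorem stmt11_general (p : ℕ) (hp : p.Prime) (ζ : ℂ) (hζ : IsPrimitiveRoot ζ p)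
    (z : Algebra.adjoin ℤ ({ζ} : Set ℂ)) (hz : (z : ℂ) = ζ)
    (σ τ : Algebra.adjoin ℤ ({ζ} : Set ℂ) →+* Algebra.adjoin ℤ ({ζ} : Set ℂ))
    (hστ : σ ≠ τ)
    (D : Algebra.adjoin ℤ ({ζ} : Set ℂ) →ₗ[ℤ] Algebra.adjoin ℤ ({ζ} : Set ℂ))
    (hD1 : D 1 = 0) :
    (∀ x y, D (x * y) = D x * τ y + σ x * D y) ↔
      (∀ k : ℕ, 1 ≤ k → k ≤ p - 2 →
        D (z ^ k) = (∑ ij ∈ Finset.HasAntidiagonal.antidiagonal (k - 1), σ z ^ ij.1 * τ z ^ ij.2) * D z) := by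
  have hgen : Algebra.adjoin ℤ {z} = ⊤ := by
    rw [← Algebra.adjoin_adjoin_coe_preimage]
    congr
    ext
    simp [Subtype.ext_iff, hz]
  have hsum : ∑ i ∈ range p, z ^ i = 0 :=
    Subtype.ext (by push_cast [hz]; exact hζ.geom_sum_eq_zero hp.one_lt)
  have hστz : σ z ≠ τ z := fun h => hστ (RingHom.eq_of_eq_of_adjoin_singleton_eq_top hgen h)
  rw [twisted_leibniz_iff σ τ D hστz]
  refine ⟨fun h k hk _ => (eq_sum_antidiagonal_mul_iff hστz hk).2 ?_, fun h => ?_⟩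
  · simpa only [map_pow] using h (z ^ k)
  refine sub_mul_apply_eq_of_pow_lt hgen hp.pos hsum σ τ D fun k hk => ?_
  rcases k with _ | k
  · simp [hD1]
  · exact (eq_sum_antidiagonal_mul_iff hστz (by omega)).1 (h (k + 1) (by omega) (by omega))

/-- Let `p` be an odd prime, `ζ` a primitive `p`-th root of unity, and `σ`, `τ`
two distinct ring endomorphisms of `ℤ[ζ]`.  Let `D : ℤ[ζ] → ℤ[ζ]` be a `ℤ`-linear map with
`D 1 = 0`.  Then `D` is a `(σ,τ)`-derivation if and only if
`D (ζ^k) = (Σ_{i+j=k-1} σ(ζ)^i * τ(ζ)^j) * D ζ` for all `k ∈ {1, …, p-2}`. -/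
theorem stmt11 (p : ℕ) (hp : p.Prime) (hodd : Odd p) (ζ : ℂ) (hζ : IsPrimitiveRoot ζ p)
    (z : Algebra.adjoin ℤ ({ζ} : Set ℂ)) (hz : (z : ℂ) = ζ)
    (σ τ : Algebra.adjoin ℤ ({ζ} : Set ℂ) →+* Algebra.adjoin ℤ ({ζ} : Set ℂ))
    (hστ : σ ≠ τ)
    (D : Algebra.adjoin ℤ ({ζ} : Set ℂ) →ₗ[ℤ] Algebra.adjoin ℤ ({ζ} : Set ℂ))
    (hD1 : D 1 = 0) :
    (∀ x y, D (x * y) = D x * τ y + σ x * D y) ↔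
      (∀ k : ℕ, 1 ≤ k → k ≤ p - 2 →
        D (z ^ k) = (∑ ij ∈ Finset.HasAntidiagonal.antidiagonal (k - 1), σ z ^ ij.1 * τ z ^ ij.2) * D z) :=
  stmt11_general p hp ζ hζ z hz σ τ hστ D hD1
end

section
/- Let p be an odd prime, ζ a primitive p-th root of unity, and σ, τ two distinct ring endomorphisms of ℤ[ζ]. Then the set of all (σ,τ)-derivations of ℤ[ζ] is a ℤ-submodule of the ℤ-module of ℤ-linear endomorphisms of ℤ[ζ], and this submodule is free of rank p − 1. -/
section Aux

variable {B : Type*} [CommRing B]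

/-- The `ℤ`-submodule of `(σ,τ)`-derivations of `B`. -/
def sigmaTauDerivs (σ τ : B →+* B) : Submodule ℤ (B →ₗ[ℤ] B) where
  carrier := {D | ∀ x y, D (x * y) = D x * τ y + σ x * D y}
  add_mem' := by
    intro D E hD hE x y
    simp only [LinearMap.add_apply, hD x y, hE x y]
    ring
  zero_mem' := by intro x y; simp
  smul_mem' := by
    intro n D hD x y
    simp only [LinearMap.smul_apply, hD x y, smul_add, smul_mul_assoc, mul_smul_comm]

theorem mem_sigmaTauDerivs (σ τ : B →+* B) (D : B →ₗ[ℤ] B) :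
    D ∈ sigmaTauDerivs σ τ ↔ ∀ x y, D (x * y) = D x * τ y + σ x * D y := Iff.rfl

theorem sigmaTauDerivs_equiv [IsDomain B] (σ τ : B →+* B) (z : B)
    (hz : Algebra.adjoin ℤ ({z} : Set B) = ⊤) (hστ : σ ≠ τ) :
    Nonempty (sigmaTauDerivs σ τ ≃ₗ[ℤ] B) := by
  classical
  have hmem : ∀ x : B, x ∈ Algebra.adjoin ℤ ({z} : Set B) := fun x => hz ▸ trivial
  -- σ and τ differ on z
  have hab : σ z ≠ τ z := by
    intro h
    apply hστ
    ext x
    induction hmem x using Algebra.adjoin_induction with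
    | mem w hw =>
      rcases Set.mem_singleton_iff.1 hw with rfl
      exact h
    | algebraMap r => simp only [algebraMap_int_eq, eq_intCast, map_intCast]
    | add x y _ _ hx hy => rw [map_add, map_add, hx, hy]
    | mul x y _ _ hx hy => rw [map_mul, map_mul, hx, hy]
  set d : B := σ z - τ z with hd
  have hd0 : d ≠ 0 := sub_ne_zero.2 hab
  -- existence of "division by d"
  have hdvd : ∀ x : B, ∃ y : B, d * y = σ x - τ x := by
    intro x
    induction hmem x using Algebra.adjoin_induction with
    | mem w hw =>
      rcases Set.mem_singleton_iff.1 hw with rfl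
      exact ⟨1, by rw [mul_one]⟩
    | algebraMap r =>
      exact ⟨0, by simp only [algebraMap_int_eq, eq_intCast, map_intCast, sub_self, mul_zero]⟩
    | add x y _ _ hx hy =>
      obtain ⟨y1, h1⟩ := hx
      obtain ⟨y2, h2⟩ := hy
      exact ⟨y1 + y2, by rw [map_add, map_add]; linear_combination h1 + h2⟩
    | mul x y _ _ hx hy =>
      obtain ⟨y1, h1⟩ := hx
      obtain ⟨y2, h2⟩ := hy
      refine ⟨σ x * y2 + y1 * τ y, ?_⟩
      rw [map_mul, map_mul]
      linear_combination σ x * h2 + τ y * h1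
  choose u hu using hdvd
  have hcan : ∀ {y y' : B}, d * y = d * y' → y = y' := fun h => mul_left_cancel₀ hd0 h
  have hu0 : u 0 = 0 := hcan (by rw [hu 0]; simp)
  have huadd : ∀ x y : B, u (x + y) = u x + u y := by
    intro x y
    refine hcan ?_
    rw [hu, mul_add, hu, hu, map_add, map_add]
    ring
  have huz : u z = 1 := hcan (by rw [hu z, mul_one])
  -- any derivation kills 1
  have hD1 : ∀ D : B →ₗ[ℤ] B, D ∈ sigmaTauDerivs σ τ → D 1 = 0 := by
    intro D hD
    have h := hD 1 1
    simp only [mul_one, map_one, one_mul] at h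
    have h' : D 1 + 0 = D 1 + D 1 := by rw [add_zero]; exact h
    exact (add_left_cancel h').symm
  -- any derivation vanishing at z vanishes
  have hinj : ∀ D : B →ₗ[ℤ] B, D ∈ sigmaTauDerivs σ τ → D z = 0 → D = 0 := by
    intro D hD hzero
    ext x
    show D x = 0
    induction hmem x using Algebra.adjoin_induction with
    | mem w hw =>
      rcases Set.mem_singleton_iff.1 hw with rfl
      exact hzero
    | algebraMap r =>
      rw [Algebra.algebraMap_eq_smul_one, map_smul, hD1 D hD, smul_zero]
    | add x y _ _ hx hy => rw [map_add, hx, hy, add_zero]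
    | mul x y _ _ hx hy => rw [hD x y, hx, hy, zero_mul, mul_zero, add_zero]
  -- the derivation attached to c : B
  have hDc : ∀ c : B, ∃ D : B →ₗ[ℤ] B, D ∈ sigmaTauDerivs σ τ ∧ D z = c := by
    intro c
    refine ⟨AddMonoidHom.toIntLinearMap
      { toFun := fun x => c * u x
        map_zero' := by show c * u 0 = 0; rw [hu0, mul_zero]
        map_add' := fun x y => by show c * u (x + y) = c * u x + c * u y
                                  rw [huadd, mul_add] }, ?_, ?_⟩
    · intro x y
      show c * u (x * y) = c * u x * τ y + σ x * (c * u y)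
      refine hcan ?_
      have h1 := hu (x * y)
      rw [map_mul, map_mul] at h1
      have h2 := hu x
      have h3 := hu y
      linear_combination c * h1 - (c * τ y) * h2 - (c * σ x) * h3
    · show c * u z = c
      rw [huz, mul_one]
  -- evaluation at z as a linear map on the submodule
  let ψ : sigmaTauDerivs σ τ →ₗ[ℤ] B :=
    { toFun := fun D => D.1 z
      map_add' := fun D E => rfl
      map_smul' := fun n D => rfl }
  have hψbij : Function.Bijective ψ := by
    constructor
    · intro D E h
      have hsub : (D.1 - E.1) ∈ sigmaTauDerivs σ τ := (sigmaTauDerivs σ τ).sub_mem D.2 E.2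
      have h0 : (D.1 - E.1) z = 0 := by
        simp only [LinearMap.sub_apply]
        exact sub_eq_zero.2 h
      exact Subtype.ext (sub_eq_zero.1 (hinj _ hsub h0))
    · intro c
      obtain ⟨D, hD, hDz⟩ := hDc c
      exact ⟨⟨D, hD⟩, hDz⟩
  exact ⟨LinearEquiv.ofBijective ψ hψbij⟩

end Aux

/-- Let `p` be an odd prime, `ζ` a primitive `p`-th root of unity, and `σ`, `τ`
two distinct ring endomorphisms of `ℤ[ζ]`.  Then the set of all `(σ,τ)`-derivations of `ℤ[ζ]`
is a `ℤ`-submodule of the `ℤ`-module of `ℤ`-linear endomorphisms of `ℤ[ζ]`, and this submodule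
is free of rank `p - 1`. -/
theorem stmt12 (p : ℕ) (hp : p.Prime) (hodd : Odd p) (ζ : ℂ) (hζ : IsPrimitiveRoot ζ p)
    (σ τ : Algebra.adjoin ℤ ({ζ} : Set ℂ) →+* Algebra.adjoin ℤ ({ζ} : Set ℂ))
    (hστ : σ ≠ τ) :
    ∃ S : Submodule ℤ (Algebra.adjoin ℤ ({ζ} : Set ℂ) →ₗ[ℤ] Algebra.adjoin ℤ ({ζ} : Set ℂ)),
      (∀ D, D ∈ S ↔ ∀ x y, D (x * y) = D x * τ y + σ x * D y) ∧
      Module.Free ℤ S ∧ Module.finrank ℤ S = p - 1 := by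
  have hp0 : 0 < p := hp.pos
  have hint : IsIntegral ℤ ζ := hζ.isIntegral hp0
  let pb : PowerBasis ℤ (Algebra.adjoin ℤ ({ζ} : Set ℂ)) := Algebra.adjoin.powerBasis' hint
  have hgen : Algebra.adjoin ℤ
      ({(⟨ζ, Algebra.self_mem_adjoin_singleton ℤ ζ⟩ : Algebra.adjoin ℤ ({ζ} : Set ℂ))} :
        Set (Algebra.adjoin ℤ ({ζ} : Set ℂ))) = ⊤ := by
    have := pb.adjoin_gen_eq_top
    rwa [Algebra.adjoin.powerBasis'_gen] at this
  obtain ⟨e⟩ := sigmaTauDerivs_equiv σ τ _ hgen hστ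
  have hfreeA : Module.Free ℤ (Algebra.adjoin ℤ ({ζ} : Set ℂ)) := Module.Free.of_basis pb.basis
  refine ⟨sigmaTauDerivs σ τ, mem_sigmaTauDerivs σ τ, Module.Free.of_equiv e.symm, ?_⟩
  rw [e.finrank_eq, pb.finrank, Algebra.adjoin.powerBasis'_dim,
    ← Polynomial.cyclotomic_eq_minpoly hζ hp0, Polynomial.natDegree_cyclotomic,
    Nat.totient_prime hp]
end

section
/- Let ζ be a primitive 3rd root of unity and let σ, τ be two distinct ring endomorphisms of ℤ[ζ]. Then every ℤ-linear map D : ℤ[ζ] → ℤ[ζ] with D(1) = 0 is a (σ,τ)-derivation. -/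
set_option synthInstance.maxHeartbeats 1000000 in
/-- Let `ζ` be a primitive `3`rd root of unity and `σ`, `τ` two distinct ring
endomorphisms of `ℤ[ζ]`.  Then every `ℤ`-linear map `D : ℤ[ζ] → ℤ[ζ]` with `D 1 = 0` is a
`(σ,τ)`-derivation. -/
theorem stmt13 (ζ : ℂ) (hζ : IsPrimitiveRoot ζ 3)
    (σ τ : Algebra.adjoin ℤ ({ζ} : Set ℂ) →+* Algebra.adjoin ℤ ({ζ} : Set ℂ))
    (hστ : σ ≠ τ)
    (D : Algebra.adjoin ℤ ({ζ} : Set ℂ) →ₗ[ℤ] Algebra.adjoin ℤ ({ζ} : Set ℂ))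
    (hD1 : D 1 = 0) :
    ∀ x y, D (x * y) = D x * τ y + σ x * D y := by
  have hpow : ζ ^ 3 = 1 := hζ.pow_eq_one
  have hne1 : ζ ≠ 1 := hζ.ne_one (by norm_num)
  have hz2C : ζ * ζ = -1 - ζ := by
    have h : (ζ - 1) * (ζ * ζ + ζ + 1) = 0 := by linear_combination hpow
    rcases mul_eq_zero.mp h with h1 | h2
    · exact absurd (by linear_combination h1) hne1
    · linear_combination h2
  let z : Algebra.adjoin ℤ ({ζ} : Set ℂ) := ⟨ζ, Algebra.self_mem_adjoin_singleton ℤ ζ⟩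
  have hz2 : z * z = -1 - z := by
    apply Subtype.ext
    push_cast
    exact hz2C
  have hdecC : ∀ w ∈ Algebra.adjoin ℤ ({ζ} : Set ℂ), ∃ a b : ℤ, w = a + b * ζ := by
    intro w hw
    induction hw using Algebra.adjoin_induction with
    | mem x hx =>
        rcases hx with rfl
        exact ⟨0, 1, by push_cast; ring⟩
    | algebraMap r => exact ⟨r, 0, by simp⟩
    | add x y hx hy ihx ihy =>
        obtain ⟨a, b, rfl⟩ := ihx
        obtain ⟨c, d, rfl⟩ := ihy
        exact ⟨a + c, b + d, by push_cast; ring⟩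
    | mul x y hx hy ihx ihy =>
        obtain ⟨a, b, rfl⟩ := ihx
        obtain ⟨c, d, rfl⟩ := ihy
        exact ⟨a * c - b * d, a * d + b * c - b * d,
          by push_cast; linear_combination (b * d : ℂ) * hz2C⟩
  have hdec : ∀ x : Algebra.adjoin ℤ ({ζ} : Set ℂ),
      ∃ a b : ℤ, x = a • (1 : Algebra.adjoin ℤ ({ζ} : Set ℂ)) + b • z := by
    intro x
    obtain ⟨a, b, hab⟩ := hdecC (x : ℂ) x.2
    refine ⟨a, b, Subtype.ext ?_⟩
    push_cast
    simpa using hab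
  have hρ : ∀ (ρ : Algebra.adjoin ℤ ({ζ} : Set ℂ) →+* Algebra.adjoin ℤ ({ζ} : Set ℂ))
      (a b : ℤ), ρ (a • (1 : Algebra.adjoin ℤ ({ζ} : Set ℂ)) + b • z)
        = a • (1 : Algebra.adjoin ℤ ({ζ} : Set ℂ)) + b • ρ z := by
    intro ρ a b
    simp only [zsmul_eq_mul, mul_one, map_add, map_mul, map_intCast]
  have hroot : ∀ ρ : Algebra.adjoin ℤ ({ζ} : Set ℂ) →+* Algebra.adjoin ℤ ({ζ} : Set ℂ),
      ((ρ z : Algebra.adjoin ℤ ({ζ} : Set ℂ)) : ℂ) = ζ ∨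
      ((ρ z : Algebra.adjoin ℤ ({ζ} : Set ℂ)) : ℂ) = -1 - ζ := by
    intro ρ
    have h0 : ρ z * ρ z + ρ z + 1 = 0 := by
      have h : ρ (z * z + z + 1) = ρ 0 := by
        congr 1
        rw [hz2]; ring
      simpa [map_add, map_mul, map_one, map_zero] using h
    have h0C : ((ρ z : Algebra.adjoin ℤ ({ζ} : Set ℂ)) : ℂ) * (ρ z : ℂ) + (ρ z : ℂ) + 1 = 0 := by
      have := congrArg (Subtype.val) h0
      push_cast at this
      exact this
    have h : ((ρ z : ℂ) - ζ) * ((ρ z : ℂ) + 1 + ζ) = 0 := by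
      linear_combination h0C - hz2C
    rcases mul_eq_zero.mp h with h1 | h2
    · left; linear_combination h1
    · right; linear_combination h2
  have hne : σ z ≠ τ z := by
    intro heq
    apply hστ
    ext x
    obtain ⟨a, b, rfl⟩ := hdec x
    rw [hρ, hρ, heq]
  have hsum : σ z + τ z = -1 := by
    apply Subtype.ext
    have hneC : ((σ z : Algebra.adjoin ℤ ({ζ} : Set ℂ)) : ℂ) ≠ ((τ z : Algebra.adjoin ℤ ({ζ} : Set ℂ)) : ℂ) :=
      fun h => hne (Subtype.ext h)
    rcases hroot σ with h1 | h1 <;> rcases hroot τ with h2 | h2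
    · exact absurd (h1.trans h2.symm) hneC
    · push_cast; rw [h1, h2]; ring
    · push_cast; rw [h1, h2]; ring
    · exact absurd (h1.trans h2.symm) hneC
  intro x y
  obtain ⟨a, b, rfl⟩ := hdec x
  obtain ⟨c, d, rfl⟩ := hdec y
  have hDx : ∀ (a b : ℤ), D (a • (1 : Algebra.adjoin ℤ ({ζ} : Set ℂ)) + b • z) = b • D z := by
    intro a b
    rw [map_add, LinearMap.map_smul, LinearMap.map_smul, hD1, smul_zero, zero_add]
  have hprod : (a • (1 : Algebra.adjoin ℤ ({ζ} : Set ℂ)) + b • z) * (c • 1 + d • z)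
      = (a * c - b * d) • (1 : Algebra.adjoin ℤ ({ζ} : Set ℂ)) + (a * d + b * c - b * d) • z := by
    simp only [zsmul_eq_mul]
    push_cast
    linear_combination ((b : Algebra.adjoin ℤ ({ζ} : Set ℂ)) * d) * hz2
  rw [hprod, hDx, hDx, hDx, hρ, hρ]
  simp only [zsmul_eq_mul]
  push_cast
  linear_combination (-(b : Algebra.adjoin ℤ ({ζ} : Set ℂ)) * d * D z) * hsum
end

section
/- Let m and n be distinct squarefree integers, both different from 1, and let A = ℤ[√m, √n] ⊆ ℂ with the four ring endomorphisms φ₁, φ₂, φ₃, φ₄ determined respectively by (√m ↦ √m, √n ↦ √n), (√m ↦ √m, √n ↦ −√n), (√m ↦ −√m, √n ↦ √n), (√m ↦ −√m, √n ↦ −√n). Let D : A → A be a ℤ-linear map with D(1) = 0 and D(√m) = 0. Then: (a) if D(√m·√n) = √m · D(√n) and (σ,τ) = (φ₁,φ₂) or (φ₂,φ₁), then D is a (σ,τ)-derivation; (b) if D(√m·√n) = −√m · D(√n) and (σ,τ) = (φ₃,φ₄) or (φ₄,φ₃), then D is a (σ,τ)-derivation. -/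
/-- Auxiliary: a generic sign-twisted derivation lemma in any commutative ring
spanned over `ℤ` by `1, a, b, a*b` with `a*a = m`, `b*b = n`. -/
theorem stmt16_aux {R : Type*} [CommRing R] (m n : ℤ) (a b : R)
    (ha2 : a * a = (m : R)) (hb2 : b * b = (n : R))
    (key : ∀ x : R, ∃ c0 c1 c2 c3 : ℤ,
      x = c0 • (1 : R) + c1 • a + c2 • b + c3 • (a * b))
    (D : R →ₗ[ℤ] R) (hD1 : D 1 = 0) (hDa : D a = 0)
    (e : ℤ) (he : e = 1 ∨ e = -1) (f g : R →+* R)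
    (hfa : f a = (e : R) * a) (hfb : f b = b)
    (hga : g a = (e : R) * a) (hgb : g b = -b)
    (hDab : D (a * b) = (e : R) * (a * D b)) :
    ∀ x y, D (x * y) = D x * g y + f x * D y := by
  have Dlin : ∀ (c : ℤ) (u : R), D ((c : R) * u) = (c : R) * D u := by
    intro c u
    rw [← zsmul_eq_mul, map_zsmul, zsmul_eq_mul]
  have key' : ∀ x : R, ∃ c0 c1 c2 c3 : ℤ,
      x = (c0 : R) * 1 + (c1 : R) * a + (c2 : R) * b + (c3 : R) * (a * b) := by
    intro x
    obtain ⟨c0, c1, c2, c3, rfl⟩ := key x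
    exact ⟨c0, c1, c2, c3, by simp [zsmul_eq_mul]⟩
  intro x y
  obtain ⟨c0, c1, c2, c3, rfl⟩ := key' x
  obtain ⟨d0, d1, d2, d3, rfl⟩ := key' y
  have hxy : ((c0 : R) * 1 + (c1 : R) * a + (c2 : R) * b + (c3 : R) * (a * b)) *
      ((d0 : R) * 1 + (d1 : R) * a + (d2 : R) * b + (d3 : R) * (a * b)) =
      ((c0*d0 + c1*d1*m + c2*d2*n + c3*d3*(m*n) : ℤ) : R) * 1 +
      ((c0*d1 + c1*d0 + c2*d3*n + c3*d2*n : ℤ) : R) * a +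
      ((c0*d2 + c2*d0 + c1*d3*m + c3*d1*m : ℤ) : R) * b +
      ((c0*d3 + c3*d0 + c1*d2 + c2*d1 : ℤ) : R) * (a * b) := by
    push_cast
    linear_combination
      ((c1:R)*d1 + ((c1:R)*d3 + (c3:R)*d1)*b + (c3:R)*d3*(b*b)) * ha2 +
      ((c2:R)*d2 + ((c2:R)*d3 + (c3:R)*d2)*a + (c3:R)*d3*(m:R)) * hb2
  have hDx : D ((c0 : R) * 1 + (c1 : R) * a + (c2 : R) * b + (c3 : R) * (a * b)) =
      (c2 : R) * D b + (c3 : R) * ((e : R) * (a * D b)) := by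
    rw [map_add, map_add, map_add, Dlin, Dlin, Dlin, Dlin, hD1, hDa, hDab]
    ring
  have hDy : D ((d0 : R) * 1 + (d1 : R) * a + (d2 : R) * b + (d3 : R) * (a * b)) =
      (d2 : R) * D b + (d3 : R) * ((e : R) * (a * D b)) := by
    rw [map_add, map_add, map_add, Dlin, Dlin, Dlin, Dlin, hD1, hDa, hDab]
    ring
  have hDxy : D (((c0 : R) * 1 + (c1 : R) * a + (c2 : R) * b + (c3 : R) * (a * b)) *
      ((d0 : R) * 1 + (d1 : R) * a + (d2 : R) * b + (d3 : R) * (a * b))) =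
      ((c0*d2 + c2*d0 + c1*d3*m + c3*d1*m : ℤ) : R) * D b +
      ((c0*d3 + c3*d0 + c1*d2 + c2*d1 : ℤ) : R) * ((e : R) * (a * D b)) := by
    rw [hxy, map_add, map_add, map_add, Dlin, Dlin, Dlin, Dlin, hD1, hDa, hDab]
    ring
  have hgy : g ((d0 : R) * 1 + (d1 : R) * a + (d2 : R) * b + (d3 : R) * (a * b)) =
      (d0 : R) + (d1 : R) * ((e : R) * a) - (d2 : R) * b - (d3 : R) * ((e : R) * a * b) := by
    rw [map_add, map_add, map_add, map_mul, map_mul, map_mul, map_mul, map_mul, map_one,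
      map_intCast, map_intCast, map_intCast, map_intCast, hga, hgb]
    ring
  have hfx : f ((c0 : R) * 1 + (c1 : R) * a + (c2 : R) * b + (c3 : R) * (a * b)) =
      (c0 : R) + (c1 : R) * ((e : R) * a) + (c2 : R) * b + (c3 : R) * ((e : R) * a * b) := by
    rw [map_add, map_add, map_add, map_mul, map_mul, map_mul, map_mul, map_mul, map_one,
      map_intCast, map_intCast, map_intCast, map_intCast, hfa, hfb]
    ring
  rw [hDxy, hDx, hDy, hgy, hfx]
  rcases he with rfl | rfl <;>
  · push_cast
    linear_combination (-(((c3:R)*d1 + (c1:R)*d3) * D b)) * ha2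



/-- Let `m`, `n` be distinct squarefree integers, both different from `1`, let
`A = ℤ[√m, √n] ⊆ ℂ` with the four ring endomorphisms `φ₁, φ₂, φ₃, φ₄` determined by
`(√m ↦ √m, √n ↦ √n)`, `(√m ↦ √m, √n ↦ -√n)`, `(√m ↦ -√m, √n ↦ √n)`, `(√m ↦ -√m, √n ↦ -√n)`.
Let `D : A → A` be `ℤ`-linear with `D 1 = 0` and `D √m = 0`.  Then:
(a) if `D (√m √n) = √m * D √n` and `(σ,τ) = (φ₁,φ₂)` or `(φ₂,φ₁)`, then `D` is a
`(σ,τ)`-derivation;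
(b) if `D (√m √n) = -√m * D √n` and `(σ,τ) = (φ₃,φ₄)` or `(φ₄,φ₃)`, then `D` is a
`(σ,τ)`-derivation. -/
theorem stmt16 (m n : ℤ) (hm : Squarefree m) (hn : Squarefree n)
    (hm1 : m ≠ 1) (hn1 : n ≠ 1) (hmn : m ≠ n)
    (sm sn : ℂ) (hsm : sm ^ 2 = (m : ℂ)) (hsn : sn ^ 2 = (n : ℂ))
    (a b : Algebra.adjoin ℤ ({sm, sn} : Set ℂ)) (ha : (a : ℂ) = sm) (hb : (b : ℂ) = sn)
    (φ₁ φ₂ φ₃ φ₄ :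
      Algebra.adjoin ℤ ({sm, sn} : Set ℂ) →+* Algebra.adjoin ℤ ({sm, sn} : Set ℂ))
    (hφ₁ : φ₁ a = a ∧ φ₁ b = b) (hφ₂ : φ₂ a = a ∧ φ₂ b = -b)
    (hφ₃ : φ₃ a = -a ∧ φ₃ b = b) (hφ₄ : φ₄ a = -a ∧ φ₄ b = -b)
    (D : Algebra.adjoin ℤ ({sm, sn} : Set ℂ) →ₗ[ℤ] Algebra.adjoin ℤ ({sm, sn} : Set ℂ))
    (hD1 : D 1 = 0) (hDa : D a = 0) :
    (D (a * b) = a * D b →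
      ((∀ x y, D (x * y) = D x * φ₂ y + φ₁ x * D y) ∧
       (∀ x y, D (x * y) = D x * φ₁ y + φ₂ x * D y))) ∧
    (D (a * b) = -(a * D b) →
      ((∀ x y, D (x * y) = D x * φ₄ y + φ₃ x * D y) ∧
       (∀ x y, D (x * y) = D x * φ₃ y + φ₄ x * D y))) := by
  have ha2 : a * a = ((m : ℤ) : Algebra.adjoin ℤ ({sm, sn} : Set ℂ)) := by
    apply Subtype.ext
    push_cast
    rw [ha, ← sq, hsm]
  have hb2 : b * b = ((n : ℤ) : Algebra.adjoin ℤ ({sm, sn} : Set ℂ)) := by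
    apply Subtype.ext
    push_cast
    rw [hb, ← sq, hsn]
  have key : ∀ x : Algebra.adjoin ℤ ({sm, sn} : Set ℂ), ∃ c0 c1 c2 c3 : ℤ,
      x = c0 • (1 : Algebra.adjoin ℤ ({sm, sn} : Set ℂ)) + c1 • a + c2 • b + c3 • (a * b) := by
    intro x
    obtain ⟨z, hz⟩ := x
    have H : ∃ c0 c1 c2 c3 : ℤ,
        z = (c0 : ℂ) + (c1 : ℂ) * sm + (c2 : ℂ) * sn + (c3 : ℂ) * (sm * sn) := by
      induction hz using Algebra.adjoin_induction with
      | mem w hw =>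
        rcases hw with hw | hw
        · exact ⟨0, 1, 0, 0, by rw [hw]; push_cast; ring⟩
        · exact ⟨0, 0, 1, 0, by rw [Set.mem_singleton_iff.mp hw]; push_cast; ring⟩
      | algebraMap r => exact ⟨r, 0, 0, 0, by push_cast; simp⟩
      | add u v hu hv ihu ihv =>
        obtain ⟨c0, c1, c2, c3, rfl⟩ := ihu
        obtain ⟨d0, d1, d2, d3, rfl⟩ := ihv
        exact ⟨c0 + d0, c1 + d1, c2 + d2, c3 + d3, by push_cast; ring⟩
      | mul u v hu hv ihu ihv =>
        obtain ⟨c0, c1, c2, c3, rfl⟩ := ihu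
        obtain ⟨d0, d1, d2, d3, rfl⟩ := ihv
        refine ⟨c0*d0 + c1*d1*m + c2*d2*n + c3*d3*(m*n),
          c0*d1 + c1*d0 + c2*d3*n + c3*d2*n,
          c0*d2 + c2*d0 + c1*d3*m + c3*d1*m,
          c0*d3 + c3*d0 + c1*d2 + c2*d1, ?_⟩
        push_cast
        linear_combination
          ((c1:ℂ)*d1 + ((c1:ℂ)*d3 + (c3:ℂ)*d1)*sn + (c3:ℂ)*d3*sn^2) * hsm +
          ((c2:ℂ)*d2 + ((c2:ℂ)*d3 + (c3:ℂ)*d2)*sm + (c3:ℂ)*d3*(m:ℂ)) * hsn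
    obtain ⟨c0, c1, c2, c3, hc⟩ := H
    refine ⟨c0, c1, c2, c3, ?_⟩
    apply Subtype.ext
    push_cast
    rw [ha, hb]
    convert hc using 2 <;> simp [zsmul_eq_mul]
  obtain ⟨hφ₁a, hφ₁b⟩ := hφ₁
  obtain ⟨hφ₂a, hφ₂b⟩ := hφ₂
  obtain ⟨hφ₃a, hφ₃b⟩ := hφ₃
  obtain ⟨hφ₄a, hφ₄b⟩ := hφ₄
  constructor
  · intro hDab
    have h1 := stmt16_aux m n a b ha2 hb2 key D hD1 hDa 1 (Or.inl rfl) φ₁ φ₂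
      (by rw [hφ₁a]; push_cast; ring) hφ₁b (by rw [hφ₂a]; push_cast; ring) hφ₂b
      (by rw [hDab]; push_cast; ring)
    refine ⟨h1, fun x y => ?_⟩
    rw [mul_comm, h1 y x]
    ring
  · intro hDab
    have h1 := stmt16_aux m n a b ha2 hb2 key D hD1 hDa (-1) (Or.inr rfl) φ₃ φ₄
      (by rw [hφ₃a]; push_cast; ring) hφ₃b (by rw [hφ₄a]; push_cast; ring) hφ₄b
      (by rw [hDab]; push_cast; ring)
    refine ⟨h1, fun x y => ?_⟩
    rw [mul_comm, h1 y x]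
    ring
end

section
/- Let m and n be distinct squarefree integers, both different from 1, let A = ℤ[√m, √n] ⊆ ℂ, and let σ and τ be two distinct ring endomorphisms of A. Then the set of all (σ,τ)-derivations of A is a ℤ-submodule of the ℤ-module of ℤ-linear endomorphisms of A, and this submodule is free of rank 4. -/
/-!
Swapping `x` and `y` in the twisted Leibniz rule gives `D x * (τ y - σ y) = D y * (τ x - σ x)`.
So in a domain a `(σ,τ)`-derivation is determined by its value at any `y` with `σ y ≠ τ y`,
while every `a ∈ A` yields the derivation `a * (τ - σ)`. The module of `(σ,τ)`-derivations thus
embeds into `A` and receives an embedding of `A`, hence has the `ℤ`-rank of `A`; being finitely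
generated and torsion-free it is free. For `A = ℤ[√m, √n]` that rank is `4`: squarefreeness
makes `1, √m, √n, √m√n` linearly independent, and they span `A` since `√m ^ 2, √n ^ 2 ∈ ℤ`.
-/

section TwistedDerivation

variable {A : Type*} [CommRing A]

def twistedDerivations (σ τ : A →+* A) : Submodule ℤ (A →ₗ[ℤ] A) where
  carrier := {D | ∀ x y, D (x * y) = D x * τ y + σ x * D y}
  add_mem' {D D'} hD hD' x y := by
    simp only [LinearMap.add_apply, hD x y, hD' x y]
    ring
  zero_mem' x y := by simp
  smul_mem' k D hD x y := by
    simp only [LinearMap.smul_apply, hD x y, smul_add, smul_mul_assoc, mul_smul_comm]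

variable {σ τ : A →+* A}

theorem mem_twistedDerivations {D : A →ₗ[ℤ] A} :
    D ∈ twistedDerivations σ τ ↔ ∀ x y, D (x * y) = D x * τ y + σ x * D y :=
  Iff.rfl

theorem apply_mul_sub_eq_of_mem_twistedDerivations {D : A →ₗ[ℤ] A}
    (hD : D ∈ twistedDerivations σ τ) (x y : A) :
    D x * (τ y - σ y) = D y * (τ x - σ x) := by
  linear_combination hD y x - hD x y + congrArg D (mul_comm x y)

variable (σ τ)

theorem free_twistedDerivations [Module.Free ℤ A] [Module.Finite ℤ A] :
    Module.Free ℤ (twistedDerivations σ τ) :=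
  inferInstance

def twistedInnerDerivation : A →ₗ[ℤ] twistedDerivations σ τ where
  toFun a := ⟨LinearMap.mulLeft ℤ a ∘ₗ (τ.toAddMonoidHom - σ.toAddMonoidHom).toIntLinearMap,
    fun x y => by
      simp only [LinearMap.comp_apply, AddMonoidHom.coe_toIntLinearMap, AddMonoidHom.sub_apply,
        RingHom.toAddMonoidHom_eq_coe, AddMonoidHom.coe_coe, map_mul, LinearMap.mulLeft_apply]
      ring⟩
  map_add' a b := by ext; simp [add_mul]
  map_smul' k a := by ext; simp

theorem twistedInnerDerivation_apply (a x : A) :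
    (twistedInnerDerivation σ τ a : A →ₗ[ℤ] A) x = a * (τ x - σ x) := rfl

variable [IsDomain A]

theorem twistedInnerDerivation_injective {y : A} (hy : σ y ≠ τ y) :
    Function.Injective (twistedInnerDerivation σ τ) := by
  refine (injective_iff_map_eq_zero _).mpr fun a ha => ?_
  have := congrArg (fun D : twistedDerivations σ τ => (D : A →ₗ[ℤ] A) y) ha
  simp only [twistedInnerDerivation_apply] at this
  exact (mul_eq_zero.mp this).resolve_right (sub_ne_zero.mpr hy.symm)

theorem twistedDerivations_eval_injective {y : A} (hy : σ y ≠ τ y) :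
    Function.Injective ((LinearMap.applyₗ y).comp (twistedDerivations σ τ).subtype) := by
  refine (injective_iff_map_eq_zero _).mpr fun D hD => Subtype.ext (LinearMap.ext fun x => ?_)
  have h := apply_mul_sub_eq_of_mem_twistedDerivations D.2 x y
  simp only [LinearMap.comp_apply, Submodule.subtype_apply, LinearMap.applyₗ_apply_apply] at hD
  rw [hD, zero_mul] at h
  exact (mul_eq_zero.mp h).resolve_right (sub_ne_zero.mpr hy.symm)

theorem finrank_twistedDerivations [Module.Finite ℤ A] (h : σ ≠ τ) :
    Module.finrank ℤ (twistedDerivations σ τ) = Module.finrank ℤ A := by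
  obtain ⟨y, hy⟩ := DFunLike.ne_iff.mp h
  have heval := twistedDerivations_eval_injective σ τ hy
  have : Module.Finite ℤ (twistedDerivations σ τ) := Module.Finite.of_injective _ heval
  exact le_antisymm (LinearMap.finrank_le_finrank_of_injective heval)
    (LinearMap.finrank_le_finrank_of_injective (twistedInnerDerivation_injective σ τ hy))

end TwistedDerivation

namespace Int

theorem isSquare_of_sq_mul_eq_sq {e k P : ℤ} (he : e ≠ 0) (h : e ^ 2 * k = P ^ 2) :
    IsSquare k := by
  obtain ⟨z, rfl⟩ : e ∣ P := (Int.pow_dvd_pow_iff two_ne_zero).mp ⟨k, h.symm⟩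
  exact ⟨z, mul_left_cancel₀ (pow_ne_zero 2 he) (by rw [h]; ring)⟩

theorem eq_one_of_squarefree_of_isSquare {k : ℤ} (hk : Squarefree k) (h : IsSquare k) :
    k = 1 := by
  obtain ⟨z, rfl⟩ := h
  exact Int.isUnit_mul_self (hk z dvd_rfl)

theorem eq_of_squarefree_of_isSquare_mul {m n : ℤ} (hm : Squarefree m) (hn : Squarefree n)
    (h : IsSquare (m * n)) : m = n := by
  obtain ⟨z, hz⟩ := h
  obtain ⟨w, rfl⟩ : m ∣ z := (hm.dvd_pow_iff_dvd two_ne_zero).mp ⟨n, by rw [sq, ← hz]⟩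
  have hnw : n = m * (w * w) := mul_left_cancel₀ hm.ne_zero (by rw [hz]; ring)
  rw [hnw, Int.isUnit_mul_self (hn w ⟨m, by rw [hnw]; ring⟩), mul_one]

end Int

section SqrtIndependence

variable {R : Type*} [CommRing R] [CharZero R] {m n : ℤ} {s t : R}

theorem int_eq_zero_of_add_mul_sqrt_eq_zero (hm : Squarefree m) (hm1 : m ≠ 1)
    (hs : s ^ 2 = m) {a b : ℤ} (h : (a : R) + b * s = 0) : a = 0 ∧ b = 0 := by
  have hb : b = 0 := by
    by_contra hb
    have hsq : (b : R) ^ 2 * m = (a : R) ^ 2 := by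
      linear_combination (b * s - a) * h - (b : R) ^ 2 * hs
    exact hm1 (Int.eq_one_of_squarefree_of_isSquare hm
      (Int.isSquare_of_sq_mul_eq_sq hb (P := a) (by exact_mod_cast hsq)))
  subst hb
  exact ⟨by simpa using h, rfl⟩

theorem int_eq_zero_of_biquadratic_eq_zero (hm : Squarefree m) (hn : Squarefree n)
    (hm1 : m ≠ 1) (hn1 : n ≠ 1) (hmn : m ≠ n) (hs : s ^ 2 = m) (ht : t ^ 2 = n)
    {a b c d : ℤ} (h : (a : R) + b * s + c * t + d * (s * t) = 0) :
    a = 0 ∧ b = 0 ∧ c = 0 ∧ d = 0 := by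
  obtain ⟨e, he_def⟩ : ∃ e, e = c ^ 2 - m * d ^ 2 := ⟨_, rfl⟩
  obtain ⟨P, hP_def⟩ : ∃ P, P = b * d * m - a * c := ⟨_, rfl⟩
  obtain ⟨Q, hQ_def⟩ : ∃ Q, Q = a * d - b * c := ⟨_, rfl⟩
  -- multiplying `h` by the conjugate `c - d s` expresses `e t` in terms of `1, s`
  have het : (e : R) * t = P + Q * s := by
    subst he_def hP_def hQ_def; push_cast
    linear_combination (c - d * s) * h + (b * d + d ^ 2 * t) * hs
  have hsq : ((P ^ 2 + Q ^ 2 * m - e ^ 2 * n : ℤ) : R) + ((2 * P * Q : ℤ) : R) * s = 0 := by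
    push_cast
    linear_combination (e : R) ^ 2 * ht - (Q : R) ^ 2 * hs - (e * t + P + Q * s) * het
  obtain ⟨hnorm, hPQ⟩ := int_eq_zero_of_add_mul_sqrt_eq_zero hm hm1 hs hsq
  have he : e = 0 := by
    by_contra he
    rcases mul_eq_zero.mp (show P * Q = 0 by linarith) with hP | hQ
    · refine hmn (Int.eq_of_squarefree_of_isSquare_mul hm hn
        (Int.isSquare_of_sq_mul_eq_sq he (P := Q * m) ?_))
      rw [hP] at hnorm
      linear_combination (-m) * hnorm
    · refine hn1 (Int.eq_one_of_squarefree_of_isSquare hn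
        (Int.isSquare_of_sq_mul_eq_sq he (P := P) ?_))
      rw [hQ] at hnorm
      linear_combination -hnorm
  have hd : d = 0 := by
    by_contra hd
    exact hm1 (Int.eq_one_of_squarefree_of_isSquare hm
      (Int.isSquare_of_sq_mul_eq_sq hd (P := c) (by linear_combination he_def - he)))
  subst hd
  obtain rfl : c = 0 := pow_eq_zero_iff two_ne_zero |>.mp (by linear_combination he - he_def)
  obtain ⟨ha, hb⟩ := int_eq_zero_of_add_mul_sqrt_eq_zero hm hm1 hs (by simpa using h)
  exact ⟨ha, hb, rfl, rfl⟩

end SqrtIndependence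

section AdjoinSqrtPair

variable {R : Type*} [CommRing R] {m n : ℤ} {s t : R}

theorem exists_int_eq_of_mem_adjoin_pair (hs : s ^ 2 = m) (ht : t ^ 2 = n) {x : R}
    (hx : x ∈ Algebra.adjoin ℤ ({s, t} : Set R)) :
    ∃ a b c d : ℤ, x = a + b * s + c * t + d * (s * t) := by
  induction hx using Algebra.adjoin_induction with
  | mem x hx =>
    rcases hx with rfl | rfl
    · exact ⟨0, 1, 0, 0, by simp⟩
    · exact ⟨0, 0, 1, 0, by simp⟩
  | algebraMap r => exact ⟨r, 0, 0, 0, by simp⟩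
  | add x y _ _ hx hy =>
    obtain ⟨a, b, c, d, rfl⟩ := hx
    obtain ⟨a', b', c', d', rfl⟩ := hy
    exact ⟨a + a', b + b', c + c', d + d', by push_cast; ring⟩
  | mul x y _ _ hx hy =>
    obtain ⟨a, b, c, d, rfl⟩ := hx
    obtain ⟨a', b', c', d', rfl⟩ := hy
    refine ⟨a * a' + m * b * b' + n * c * c' + m * n * d * d',
      a * b' + b * a' + n * (c * d' + d * c'), a * c' + c * a' + m * (b * d' + d * b'),
      a * d' + d * a' + b * c' + c * b', ?_⟩
    push_cast
    linear_combination (b * b' + (b * d' + d * b') * t + d * d' * t ^ 2 : R) * hs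
      + (c * c' + (c * d' + d * c') * s + m * d * d' : R) * ht

theorem nonempty_basis_adjoin_sqrt_pair [CharZero R] (hm : Squarefree m) (hn : Squarefree n)
    (hm1 : m ≠ 1) (hn1 : n ≠ 1) (hmn : m ≠ n) (hs : s ^ 2 = m) (ht : t ^ 2 = n) :
    Nonempty (Module.Basis (Fin 4) ℤ (Algebra.adjoin ℤ ({s, t} : Set R))) := by
  have hsA : s ∈ Algebra.adjoin ℤ ({s, t} : Set R) := Algebra.subset_adjoin (by simp)
  have htA : t ∈ Algebra.adjoin ℤ ({s, t} : Set R) := Algebra.subset_adjoin (by simp)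
  let v : Fin 4 → Algebra.adjoin ℤ ({s, t} : Set R) :=
    ![1, ⟨s, hsA⟩, ⟨t, htA⟩, ⟨s, hsA⟩ * ⟨t, htA⟩]
  refine ⟨Module.Basis.mk (v := v) ?_ ?_⟩
  · rw [Fintype.linearIndependent_iff]
    intro g hg
    have hg' := congrArg Subtype.val hg
    simp only [MulMemClass.mk_mul_mk, zsmul_eq_mul, Fin.sum_univ_four, Fin.isValue,
      Matrix.cons_val_zero, mul_one, Matrix.cons_val_one, Matrix.cons_val, AddMemClass.coe_add,
      SubringClass.coe_intCast, MulMemClass.coe_mul, ZeroMemClass.coe_zero, v] at hg'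
    obtain ⟨h0, h1, h2, h3⟩ := int_eq_zero_of_biquadratic_eq_zero hm hn hm1 hn1 hmn hs ht hg'
    intro i
    fin_cases i <;> assumption
  · rintro ⟨x, hx⟩ -
    obtain ⟨a, b, c, d, hx⟩ := exists_int_eq_of_mem_adjoin_pair hs ht hx
    refine (Submodule.mem_span_range_iff_exists_fun ℤ).mpr ⟨![a, b, c, d], ?_⟩
    ext
    simp [Fin.sum_univ_four, v, hx]

end AdjoinSqrtPair

/-- Let `m`, `n` be distinct squarefree integers, both different from `1`, let
`A = ℤ[√m, √n] ⊆ ℂ`, and let `σ`, `τ` be two distinct ring endomorphisms of `A`.  Then the set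
of all `(σ,τ)`-derivations of `A` is a `ℤ`-submodule of the `ℤ`-module of `ℤ`-linear
endomorphisms of `A`, and this submodule is free of rank `4`. -/
theorem stmt17 (m n : ℤ) (hm : Squarefree m) (hn : Squarefree n)
    (hm1 : m ≠ 1) (hn1 : n ≠ 1) (hmn : m ≠ n)
    (sm sn : ℂ) (hsm : sm ^ 2 = (m : ℂ)) (hsn : sn ^ 2 = (n : ℂ))
    (σ τ : Algebra.adjoin ℤ ({sm, sn} : Set ℂ) →+* Algebra.adjoin ℤ ({sm, sn} : Set ℂ))
    (hστ : σ ≠ τ) :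
    ∃ S : Submodule ℤ
        (Algebra.adjoin ℤ ({sm, sn} : Set ℂ) →ₗ[ℤ] Algebra.adjoin ℤ ({sm, sn} : Set ℂ)),
      (∀ D, D ∈ S ↔ ∀ x y, D (x * y) = D x * τ y + σ x * D y) ∧
      Module.Free ℤ S ∧ Module.finrank ℤ S = 4 := by
  obtain ⟨b⟩ := nonempty_basis_adjoin_sqrt_pair hm hn hm1 hn1 hmn hsm hsn
  have : Module.Free ℤ (Algebra.adjoin ℤ ({sm, sn} : Set ℂ)) := Module.Free.of_basis b
  have : Module.Finite ℤ (Algebra.adjoin ℤ ({sm, sn} : Set ℂ)) := Module.Finite.of_basis b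
  refine ⟨twistedDerivations σ τ, fun D => mem_twistedDerivations,
    free_twistedDerivations σ τ, ?_⟩
  rw [finrank_twistedDerivations σ τ hστ, Module.finrank_eq_card_basis b, Fintype.card_fin]
end

section
/- Let m and n be distinct squarefree integers, both different from 1, and let A = ℤ[√m, √n] ⊆ ℂ. Then there exists a nonzero ℤ-linear map D : A → A with D(1) = 0 such that for every pair (σ,τ) of two distinct ring endomorphisms of A, D is not a (σ,τ)-derivation. -/
/-!
Let `D` send `x ∈ A` to its `√m√n`-coordinate in the basis `1, √m, √n, √m√n` (times `1`).
Then `D 1 = D √m = D √n = 0` while `D (√m √n) = 1`, so the twisted Leibniz rule already fails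
at `(√m, √n)`, whatever `σ` and `τ` are. The content is that these four elements form a
`ℤ`-basis of `A`: they span because `√m ^ 2` and `√n ^ 2` are integers, and they are
independent over `ℚ` because `m`, `n` and `m n` are not rational squares.
-/

open Submodule

section QuadraticIndependence

variable {K L : Type*} [Field K] [CommRing L] [Nontrivial L] [Algebra K L] {a b : K} {s t : L}

theorem eq_zero_of_algebraMap_add_mul_sqrt_eq_zero (ha : ¬IsSquare a)
    (hs : s ^ 2 = algebraMap K L a) {x y : K}
    (h : algebraMap K L x + algebraMap K L y * s = 0) : x = 0 ∧ y = 0 := by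
  by_cases hy : y = 0
  · subst hy
    simpa using h
  · refine absurd ⟨-x / y, ?_⟩ ha
    have hinv : algebraMap K L y⁻¹ * algebraMap K L y = 1 := by
      rw [← map_mul, inv_mul_cancel₀ hy, map_one]
    have hsx : s = algebraMap K L (-x / y) := by
      rw [div_eq_mul_inv, map_mul, map_neg]
      linear_combination algebraMap K L y⁻¹ * h - s * hinv
    apply FaithfulSMul.algebraMap_injective K L
    rw [← hs, hsx, map_mul, sq]

theorem eq_zero_of_algebraMap_add_mul_sqrt_add_mul_sqrt_eq_zero [NeZero (2 : K)]
    (ha : ¬IsSquare a) (hb : ¬IsSquare b) (hab : ¬IsSquare (a * b))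
    (hs : s ^ 2 = algebraMap K L a) (ht : t ^ 2 = algebraMap K L b) {x y z : K}
    (h : algebraMap K L x + algebraMap K L y * s + algebraMap K L z * t = 0) : z = 0 := by
  by_contra hz
  set x' := -x / z
  set y' := -y / z
  have hinv : algebraMap K L z⁻¹ * algebraMap K L z = 1 := by
    rw [← map_mul, inv_mul_cancel₀ hz, map_one]
  have htxy : t = algebraMap K L x' + algebraMap K L y' * s := by
    simp only [x', y', div_eq_mul_inv, map_mul, map_neg]
    linear_combination algebraMap K L z⁻¹ * h - t * hinv
  have hsq : algebraMap K L (x' ^ 2 + y' ^ 2 * a - b) + algebraMap K L (2 * x' * y') * s = 0 := by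
    simp only [map_sub, map_add, map_mul, map_pow, map_ofNat]
    linear_combination ht - algebraMap K L y' ^ 2 * hs -
      (t + algebraMap K L x' + algebraMap K L y' * s) * htxy
  obtain ⟨hb', hxy⟩ := eq_zero_of_algebraMap_add_mul_sqrt_eq_zero ha hs hsq
  rcases mul_eq_zero.mp hxy with hx | hy
  · rcases mul_eq_zero.mp hx with h2 | hx
    · exact two_ne_zero h2
    · exact hab ⟨a * y', by rw [hx] at hb'; linear_combination -a * hb'⟩
  · exact hb ⟨x', by rw [hy] at hb'; linear_combination -hb'⟩

theorem linearIndependent_one_sqrt_sqrt_mul_sqrt [NeZero (2 : K)]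
    (ha : ¬IsSquare a) (hb : ¬IsSquare b) (hab : ¬IsSquare (a * b))
    (hs : s ^ 2 = algebraMap K L a) (ht : t ^ 2 = algebraMap K L b) :
    LinearIndependent K ![1, s, t, s * t] := by
  rw [Fintype.linearIndependent_iff]
  intro g hg
  simp only [Fin.sum_univ_four, Matrix.cons_val, Algebra.smul_def, mul_one] at hg
  have hQ : g 2 ^ 2 - g 3 ^ 2 * a = 0 := by
    refine eq_zero_of_algebraMap_add_mul_sqrt_add_mul_sqrt_eq_zero ha hb hab hs ht
      (x := g 0 * g 2 - g 1 * g 3 * a) (y := g 1 * g 2 - g 0 * g 3) ?_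
    simp only [map_sub, map_mul, map_pow]
    -- multiplying by the conjugate `g 2 - g 3 * s` of the coefficient of `t` removes `s * t`
    linear_combination (algebraMap K L (g 2) - algebraMap K L (g 3) * s) * hg +
      (algebraMap K L (g 1) * algebraMap K L (g 3) + algebraMap K L (g 3) ^ 2 * t) * hs
  have h3 : g 3 = 0 := by
    by_contra h3
    exact ha ⟨g 2 / g 3, by field_simp; linear_combination -hQ⟩
  have h2 : g 2 = 0 := by
    rw [h3] at hQ
    simpa using hQ
  obtain ⟨h0, h1⟩ := eq_zero_of_algebraMap_add_mul_sqrt_eq_zero ha hs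
    (x := g 0) (y := g 1) (by simpa [h2, h3] using hg)
  intro i
  fin_cases i <;> assumption

end QuadraticIndependence

section Adjoin

variable {R S : Type*} [CommSemiring R] [CommSemiring S] [Algebra R S] {s t : S} {a b : R}

theorem Algebra.toSubmodule_adjoin_singleton_eq_span_of_sq_eq (hs : s ^ 2 = algebraMap R S a) :
    Subalgebra.toSubmodule (Algebra.adjoin R {s}) = span R {1, s} := by
  rw [Algebra.adjoin_eq_span, ← Submonoid.powers_eq_closure]
  have hpow (k : ℕ) : s ^ k ∈ span R {1, s} := by
    induction k using Nat.twoStepInduction with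
    | zero => exact subset_span (by simp)
    | one => exact subset_span (by simp)
    | more k hk _ =>
      rw [pow_add, hs, mul_comm, ← Algebra.smul_def]
      exact smul_mem _ _ hk
  refine le_antisymm (span_le.mpr ?_) (span_le.mpr ?_)
  · rintro _ ⟨k, rfl⟩
    exact hpow k
  · rw [Set.insert_subset_iff, Set.singleton_subset_iff]
    exact ⟨subset_span ⟨0, pow_zero s⟩, subset_span ⟨1, pow_one s⟩⟩

theorem Algebra.toSubmodule_adjoin_pair_eq_span_of_sq_eq (hs : s ^ 2 = algebraMap R S a)
    (ht : t ^ 2 = algebraMap R S b) :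
    Subalgebra.toSubmodule (Algebra.adjoin R {s, t}) = span R (Set.range ![1, s, t, s * t]) := by
  rw [Set.insert_eq, Algebra.adjoin_union_coe_submodule,
    toSubmodule_adjoin_singleton_eq_span_of_sq_eq hs,
    toSubmodule_adjoin_singleton_eq_span_of_sq_eq ht, span_mul_span]
  congr 1
  ext x
  simp only [Set.mem_mul, Set.mem_insert_iff, Set.mem_singleton_iff, Matrix.range_cons,
    Matrix.range_empty, Set.union_empty, Set.mem_union]
  aesop

end Adjoin

section AdjoinBasis

variable {R S : Type*} [CommRing R] [CommSemiring S] [Algebra R S] {s t : S} {a b : R}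

noncomputable def Algebra.adjoinPairBasis (hli : LinearIndependent R ![1, s, t, s * t])
    (hs : s ^ 2 = algebraMap R S a) (ht : t ^ 2 = algebraMap R S b) :
    Module.Basis (Fin 4) R (Algebra.adjoin R {s, t}) :=
  (Module.Basis.span hli).map
    ((LinearEquiv.ofEq _ _ (toSubmodule_adjoin_pair_eq_span_of_sq_eq hs ht).symm).trans
      (Subalgebra.toSubmoduleEquiv _))

theorem Algebra.coe_adjoinPairBasis (hli : LinearIndependent R ![1, s, t, s * t])
    (hs : s ^ 2 = algebraMap R S a) (ht : t ^ 2 = algebraMap R S b) (i : Fin 4) :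
    (adjoinPairBasis hli hs ht i : S) = ![1, s, t, s * t] i := by
  rw [adjoinPairBasis, Module.Basis.map_apply]
  exact Module.Basis.coe_span_apply hli i

end AdjoinBasis

theorem Int.not_isSquare_of_squarefree_s19 {k : ℤ} (hk : Squarefree k) (hk1 : k ≠ 1) :
    ¬IsSquare k := by
  rintro ⟨r, rfl⟩
  rcases Int.isUnit_iff.mp (hk r dvd_rfl) with rfl | rfl <;> simp at hk1

theorem Int.eq_of_squarefree_of_isSquare_mul_s19 {m n : ℤ} (hm : Squarefree m) (hn : Squarefree n)
    (h : IsSquare (m * n)) : m = n := by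
  obtain ⟨z, hz⟩ := h
  obtain ⟨w, rfl⟩ : m ∣ z := (hm.dvd_pow_iff_dvd two_ne_zero).mp ⟨n, by rw [sq, ← hz]⟩
  have hnw : n = m * (w * w) := mul_left_cancel₀ hm.ne_zero (by linear_combination hz)
  rcases Int.isUnit_iff.mp (hn w ⟨m, by rw [hnw]; ring⟩) with rfl | rfl <;> simp [hnw]

theorem not_twisted_leibniz_of_map_mul_ne_zero {A : Type*} [NonUnitalNonAssocSemiring A]
    {D σ τ : A → A} {x y : A} (hx : D x = 0) (hy : D y = 0) (hxy : D (x * y) ≠ 0) :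
    ¬∀ u v, D (u * v) = D u * τ v + σ u * D v :=
  fun h => hxy (by rw [h, hx, hy, zero_mul, mul_zero, add_zero])

/-- Let `m`, `n` be distinct squarefree integers, both different from `1`, and
let `A = ℤ[√m, √n] ⊆ ℂ`.  Then there exists a nonzero `ℤ`-linear map `D : A → A` with `D 1 = 0`
such that for every pair `(σ,τ)` of two distinct ring endomorphisms of `A`, `D` is not a
`(σ,τ)`-derivation. -/
theorem stmt19 (m n : ℤ) (hm : Squarefree m) (hn : Squarefree n)
    (hm1 : m ≠ 1) (hn1 : n ≠ 1) (hmn : m ≠ n)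
    (sm sn : ℂ) (hsm : sm ^ 2 = (m : ℂ)) (hsn : sn ^ 2 = (n : ℂ)) :
    ∃ D : Algebra.adjoin ℤ ({sm, sn} : Set ℂ) →ₗ[ℤ] Algebra.adjoin ℤ ({sm, sn} : Set ℂ),
      D ≠ 0 ∧ D 1 = 0 ∧
      ∀ σ τ : Algebra.adjoin ℤ ({sm, sn} : Set ℂ) →+* Algebra.adjoin ℤ ({sm, sn} : Set ℂ),
        σ ≠ τ → ¬ (∀ x y, D (x * y) = D x * τ y + σ x * D y) := by
  have hsq {k : ℤ} (hk : Squarefree k) (hk1 : k ≠ 1) : ¬IsSquare (k : ℚ) :=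
    Rat.isSquare_intCast_iff.not.mpr (Int.not_isSquare_of_squarefree_s19 hk hk1)
  have hmn' : ¬IsSquare ((m : ℚ) * n) := by
    rw [← Int.cast_mul, Rat.isSquare_intCast_iff]
    exact fun h => hmn (Int.eq_of_squarefree_of_isSquare_mul_s19 hm hn h)
  have hli : LinearIndependent ℤ ![1, sm, sn, sm * sn] :=
    (linearIndependent_one_sqrt_sqrt_mul_sqrt (hsq hm hm1) (hsq hn hn1) hmn'
      (by simpa using hsm) (by simpa using hsn)).restrict_scalars' ℤ
  set b := Algebra.adjoinPairBasis hli (by simpa using hsm) (by simpa using hsn)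
  have hb (i : Fin 4) : (b i : ℂ) = ![1, sm, sn, sm * sn] i := Algebra.coe_adjoinPairBasis ..
  set D := (b.coord 3).smulRight (1 : Algebra.adjoin ℤ ({sm, sn} : Set ℂ))
  have hD (i : Fin 4) : D (b i) = if i = 3 then 1 else 0 := by
    simp [D, Finsupp.single_apply]
  have hD3 : D (b 3) ≠ 0 := by simp [hD]
  have hb0 : b 0 = 1 := Subtype.ext (by simp [hb])
  have hb12 : b 1 * b 2 = b 3 := Subtype.ext (by simp [hb])
  exact ⟨D, fun h => hD3 (by rw [h, LinearMap.zero_apply]), by simpa [hb0] using hD 0,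
    fun σ τ _ => not_twisted_leibniz_of_map_mul_ne_zero (x := b 1) (y := b 2) (by simp [hD])
      (by simp [hD]) (by rwa [hb12])⟩
end
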